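/- arXiv:2110.12658 — 8 statements merged into one kernel-verified Lean document; each statement's English description precedes it below -/
import Mathlib

section
/- Let P ∈ ℝ^{N×N} be row-stochastic with rows p_1ᵀ, …, p_Nᵀ, let γ ∈ (0,1), and set A = I − γP (which is invertible). Let P̂ be a random N×N matrix whose rows p̂_1, …, p̂_N (viewed as random vectors in ℝ^N) are pairwise independent, square-integrable, and satisfy E[p̂_i] = p_i for every i. Set Ẑ = γ(P − P̂) and Ŷ = Ẑ A^{-1}. Then for any fixed matrix M ∈ ℝ^{N×N}, E[Ŷᵀ M Ŷ] = γ² A^{-T} (Σ_{i=1}^{N} M_{ii} · cov[p̂_i]) A^{-1}, where cov[p̂_i] = E[(p̂_i − p_i)(p̂_i − p_i)ᵀ]. -/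
open MeasureTheory ProbabilityTheory Matrix

/-!
With `X i := p̂ᵢ - pᵢ` the centred rows and `D` the matrix with rows `X i`, one has
`Ŷ = -γ D A⁻¹`, so `Ŷᵀ M Ŷ = γ² A⁻ᵀ (Dᵀ M D) A⁻¹` and the expectation passes through the
constant factors. Entry `(a, b)` of `Dᵀ M D` is `∑ s t, M s t X s a X t b`; the terms with
`s ≠ t` have zero mean because `X s` and `X t` are independent and centred, and the diagonal
terms give `∑ s, M s s cov[p̂ₛ]`.
-/

section

variable {Ω : Type*} [MeasurableSpace Ω] {μ : Measure Ω}
variable {ι κ m n p q : Type*} [Fintype ι] [Fintype n] [Fintype p]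

theorem integral_mul_mul_apply (L : Matrix m n ℝ) (R : Matrix p q ℝ) {F : Ω → Matrix n p ℝ}
    (hF : ∀ a b, Integrable (fun ω => F ω a b) μ) :
    (of fun j k => ∫ ω, (L * F ω * R) j k ∂μ) = L * (of fun a b => ∫ ω, F ω a b ∂μ) * R := by
  ext j k
  simp only [mul_apply, of_apply, Finset.sum_mul]
  rw [integral_finsetSum _ fun b _ =>
    integrable_finsetSum _ fun a _ => ((hF a b).const_mul _).mul_const _]
  refine Finset.sum_congr rfl fun b _ => ?_
  rw [integral_finsetSum _ fun a _ => ((hF a b).const_mul _).mul_const _]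
  exact Finset.sum_congr rfl fun a _ => by rw [integral_mul_const, integral_const_mul]

theorem transpose_mul_mul_apply {R : Type*} [CommSemiring R] (A : Matrix n m R)
    (M : Matrix n p R) (C : Matrix p q R) (a : m) (b : q) :
    (Aᵀ * M * C) a b = ∑ s, ∑ t, M s t * (A s a * C t b) := by
  simp only [mul_apply, transpose_apply, Finset.sum_mul]
  rw [Finset.sum_comm]
  exact Finset.sum_congr rfl fun s _ => Finset.sum_congr rfl fun t _ => by ring

theorem integrable_transpose_mul_mul_apply {X : ι → Ω → κ → ℝ}
    (hX : ∀ i a, MemLp (fun ω => X i ω a) 2 μ) (M : Matrix ι ι ℝ) (a b : κ) :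
    Integrable (fun ω => ((of fun i => X i ω)ᵀ * M * of fun i => X i ω) a b) μ := by
  simp only [transpose_mul_mul_apply, of_apply]
  exact integrable_finsetSum _ fun s _ => integrable_finsetSum _ fun t _ =>
    ((hX s a).integrable_mul (hX t b)).const_mul _

theorem integral_mul_eq_zero_of_indepFun {X Y : Ω → ℝ} (hXY : IndepFun X Y μ)
    (hX : Integrable X μ) (hY : AEStronglyMeasurable Y μ) (hX0 : ∫ ω, X ω ∂μ = 0) :
    ∫ ω, X ω * Y ω ∂μ = 0 := by
  rw [hXY.integral_fun_mul_eq_mul_integral hX.1 hY, hX0, zero_mul]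

theorem integral_transpose_mul_mul_of_pairwise_indepFun [IsFiniteMeasure μ] {X : ι → Ω → κ → ℝ}
    (hX : ∀ i a, MemLp (fun ω => X i ω a) 2 μ) (hX0 : ∀ i a, ∫ ω, X i ω a ∂μ = 0)
    (hindep : Pairwise fun i j => IndepFun (X i) (X j) μ) (M : Matrix ι ι ℝ) :
    (of fun a b => ∫ ω, ((of fun i => X i ω)ᵀ * M * of fun i => X i ω) a b ∂μ)
      = ∑ i, M i i • of fun a b => ∫ ω, X i ω a * X i ω b ∂μ := by
  ext a b
  simp only [of_apply, Matrix.sum_apply, Matrix.smul_apply, smul_eq_mul]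
  have hprod : ∀ s t, Integrable (fun ω => X s ω a * X t ω b) μ := fun s t =>
    (hX s a).integrable_mul (hX t b)
  have hcross : ∀ s t, s ≠ t → ∫ ω, X s ω a * X t ω b ∂μ = 0 := fun s t hst =>
    integral_mul_eq_zero_of_indepFun
      ((hindep hst).comp (measurable_pi_apply a) (measurable_pi_apply b))
      ((hX s a).integrable one_le_two) (hX t b).1 (hX0 s a)
  simp only [transpose_mul_mul_apply, of_apply]
  rw [integral_finsetSum _ fun s _ =>
    integrable_finsetSum _ fun t _ => (hprod s t).const_mul (M s t)]
  refine Finset.sum_congr rfl fun s _ => ?_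
  rw [integral_finsetSum _ fun t _ => (hprod s t).const_mul (M s t),
    Finset.sum_eq_single s (fun t _ hts => by rw [integral_const_mul, hcross s t hts.symm,
      mul_zero]) (by simp), integral_const_mul]

end

theorem stmt3_general {N : ℕ} {Ω : Type*} [MeasurableSpace Ω] (μ : Measure Ω) [IsProbabilityMeasure μ]
    (P : Matrix (Fin N) (Fin N) ℝ)
    (γ : ℝ)
    (phat : Fin N → Ω → (Fin N → ℝ))
    (h2 : ∀ i j, MemLp (fun ω => phat i ω j) 2 μ)
    (hmean : ∀ i j, ∫ ω, phat i ω j ∂μ = P i j)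
    (hindep : ∀ i j, i ≠ j → IndepFun (phat i) (phat j) μ)
    (M : Matrix (Fin N) (Fin N) ℝ) :
    letI A : Matrix (Fin N) (Fin N) ℝ := 1 - γ • P
    letI Yhat : Ω → Matrix (Fin N) (Fin N) ℝ :=
      fun ω => (γ • (P - Matrix.of fun i j => phat i ω j)) * A⁻¹
    (Matrix.of fun j k => ∫ ω, ((Yhat ω)ᵀ * M * Yhat ω) j k ∂μ)
      = γ ^ 2 • ((A⁻¹)ᵀ *
          (∑ i, M i i •
            (Matrix.of fun j k => ∫ ω, (phat i ω j - P i j) * (phat i ω k - P i k) ∂μ))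
          * A⁻¹) := by
  beta_reduce
  set B := (1 - γ • P)⁻¹
  set X : Fin N → Ω → Fin N → ℝ := fun i ω => phat i ω - P i
  set D : Ω → Matrix (Fin N) (Fin N) ℝ := fun ω => of fun i => X i ω
  have hX : ∀ i a, MemLp (fun ω => X i ω a) 2 μ := fun i a => (h2 i a).sub (memLp_const _)
  have hX0 : ∀ i a, ∫ ω, X i ω a ∂μ = 0 := fun i a => by
    simp only [X, Pi.sub_apply]
    rw [integral_sub ((h2 i a).integrable one_le_two) (integrable_const _), hmean,
      integral_const, probReal_univ, one_smul, sub_self]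
  have hXindep : Pairwise fun i j => IndepFun (X i) (X j) μ := fun i j hij =>
    (hindep i j hij).comp (measurable_id.sub_const _) (measurable_id.sub_const _)
  have hY : ∀ ω, γ • (P - of fun i j => phat i ω j) = -γ • D ω := fun ω => by
    ext i j
    simp only [D, X, Matrix.smul_apply, Matrix.sub_apply, of_apply, Pi.sub_apply, smul_eq_mul]
    ring
  have hYMY : ∀ ω,
      (-γ • D ω * B)ᵀ * M * (-γ • D ω * B) = γ ^ 2 • (Bᵀ * ((D ω)ᵀ * M * D ω) * B) :=
    fun ω => by simp [Matrix.mul_assoc, smul_smul, sq]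
  calc _ = of fun j k => ∫ ω, (γ ^ 2 • (Bᵀ * ((D ω)ᵀ * M * D ω) * B)) j k ∂μ := by
        simp only [hY, hYMY]
    _ = γ ^ 2 • (Bᵀ * (of fun a b => ∫ ω, ((D ω)ᵀ * M * D ω) a b ∂μ) * B) := by
        rw [← integral_mul_mul_apply _ _ (integrable_transpose_mul_mul_apply hX M)]
        ext j k
        simp only [of_apply, Matrix.smul_apply, smul_eq_mul, integral_const_mul]
        rfl
    _ = _ := by
        rw [integral_transpose_mul_mul_of_pairwise_indepFun hX hX0 hXindep]
        rfl

/-- Let `P` be row-stochastic with rows `p_i`, `γ ∈ (0,1)`, `A = I − γP`.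
Let `P̂` be a random matrix whose rows `p̂_i` are pairwise independent, square-integrable and
satisfy `E[p̂_i] = p_i`. Set `Ẑ = γ(P − P̂)` and `Ŷ = Ẑ A⁻¹`. Then for any fixed `M`,
`E[Ŷᵀ M Ŷ] = γ² A⁻ᵀ (Σ_i M_{ii} cov[p̂_i]) A⁻¹`. -/
theorem stmt3 {N : ℕ} {Ω : Type*} [MeasurableSpace Ω] (μ : Measure Ω) [IsProbabilityMeasure μ]
    (P : Matrix (Fin N) (Fin N) ℝ) (hP0 : ∀ i j, 0 ≤ P i j) (hP1 : ∀ i, ∑ j, P i j = 1)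
    (γ : ℝ) (hγ : γ ∈ Set.Ioo (0 : ℝ) 1)
    (phat : Fin N → Ω → (Fin N → ℝ))
    (hmeas : ∀ i, Measurable (phat i))
    (h2 : ∀ i j, MemLp (fun ω => phat i ω j) 2 μ)
    (hmean : ∀ i j, ∫ ω, phat i ω j ∂μ = P i j)
    (hindep : ∀ i j, i ≠ j → IndepFun (phat i) (phat j) μ)
    (M : Matrix (Fin N) (Fin N) ℝ) :
    letI A : Matrix (Fin N) (Fin N) ℝ := 1 - γ • P
    letI Yhat : Ω → Matrix (Fin N) (Fin N) ℝ :=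
      fun ω => (γ • (P - Matrix.of fun i j => phat i ω j)) * A⁻¹
    (Matrix.of fun j k => ∫ ω, ((Yhat ω)ᵀ * M * Yhat ω) j k ∂μ)
      = γ ^ 2 • ((A⁻¹)ᵀ *
          (∑ i, M i i •
            (Matrix.of fun j k => ∫ ω, (phat i ω j - P i j) * (phat i ω k - P i k) ∂μ))
          * A⁻¹) :=
  stmt3_general μ P γ phat h2 hmean hindep M
end

section
/- Let P ∈ ℝ^{N×N} be row-stochastic with rows p_1ᵀ, …, p_Nᵀ, let γ ∈ (0,1), and set A = I − γP (which is invertible). Let P̂ be a random N×N matrix whose rows p̂_1, …, p̂_N are pairwise independent, square-integrable, and satisfy E[p̂_i] = p_i for every i. Set Ẑ = γ(P − P̂) and Ŷ = Ẑ A^{-1}. Then E[Ŷ²] = γ² Σ_{i=1}^{N} diag(e_i) A^{-T} cov[p̂_i] A^{-1} and E[(Ŷᵀ)²] = γ² Σ_{i=1}^{N} A^{-T} cov[p̂_i] A^{-1} diag(e_i), where cov[p̂_i] = E[(p̂_i − p_i)(p̂_i − p_i)ᵀ]. -/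
open MeasureTheory ProbabilityTheory Matrix

/-!
Write `Ŷ = (-γ) • X * B` with `B = A⁻¹` and `X = P̂ - P`, whose rows are independent and centered.
Then `Ŷ² = γ² • X B X B`, and `E[(X B X)_{jc}] = ∑_{a,b} B_{ab} E[X_{ja} X_{bc}]`; independence of
distinct centered rows kills every term with `b ≠ j`, leaving `(Bᵀ cov_j)_{jc}`, i.e. the `j`-th row
of `diag(e_j) Bᵀ cov_j`. The identity for `(Ŷᵀ)²` is the transpose of the first one, since each
`cov_i` is symmetric.
-/

section EntrywiseIntegral

variable {Ω : Type*} [MeasurableSpace Ω] {μ : Measure Ω} {l m n : Type*}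

noncomputable def entrywiseIntegral (μ : Measure Ω) (M : Ω → Matrix m n ℝ) : Matrix m n ℝ :=
  of fun i j => ∫ ω, M ω i j ∂μ

lemma entrywiseIntegral_transpose (M : Ω → Matrix m n ℝ) :
    entrywiseIntegral μ (fun ω => (M ω)ᵀ) = (entrywiseIntegral μ M)ᵀ :=
  rfl

lemma entrywiseIntegral_smul (c : ℝ) (M : Ω → Matrix m n ℝ) :
    entrywiseIntegral μ (fun ω => c • M ω) = c • entrywiseIntegral μ M := by
  ext i j
  exact integral_const_mul c _

lemma entrywiseIntegral_mul_const [Fintype n] {M : Ω → Matrix l n ℝ}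
    (hM : ∀ i j, Integrable (fun ω => M ω i j) μ) (B : Matrix n m ℝ) :
    entrywiseIntegral μ (fun ω => M ω * B) = entrywiseIntegral μ M * B := by
  ext i k
  simp only [entrywiseIntegral, of_apply, mul_apply]
  rw [integral_finsetSum _ fun j _ => (hM i j).mul_const _]
  exact Finset.sum_congr rfl fun j _ => integral_mul_const _ _

end EntrywiseIntegral

section RowCovariance

variable {Ω : Type*} [MeasurableSpace Ω] {μ : Measure Ω} {m n : Type*}

noncomputable def rowCov (μ : Measure Ω) (X : n → Ω → m → ℝ) (i : n) : Matrix m m ℝ :=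
  of fun a c => ∫ ω, X i ω a * X i ω c ∂μ

lemma rowCov_transpose (X : n → Ω → m → ℝ) (i : n) : (rowCov μ X i)ᵀ = rowCov μ X i := by
  ext a c
  simp only [rowCov, transpose_apply, of_apply, mul_comm]

variable {X : n → Ω → m → ℝ}

lemma integral_mul_eq_zero_of_indepFun_s4 (hX : ∀ i a, MemLp (fun ω => X i ω a) 2 μ)
    (hX0 : ∀ i a, ∫ ω, X i ω a ∂μ = 0) {i j : n} (hij : IndepFun (X i) (X j) μ) (a c : m) :
    ∫ ω, X i ω a * X j ω c ∂μ = 0 := by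
  have hind : IndepFun (fun ω => X i ω a) (fun ω => X j ω c) μ :=
    hij.comp (measurable_pi_apply a) (measurable_pi_apply c)
  rw [hind.integral_fun_mul_eq_mul_integral (hX i a).aestronglyMeasurable
    (hX j c).aestronglyMeasurable, hX0, zero_mul]

lemma integrable_mul_apply (hX : ∀ i a, MemLp (fun ω => X i ω a) 2 μ) (i j : n) (a c : m) :
    Integrable (fun ω => X i ω a * X j ω c) μ :=
  (hX i a).integrable_mul (hX j c)

variable [Fintype m] [Fintype n]

lemma mul_mul_apply_eq_sum (M : Matrix n m ℝ) (B : Matrix m n ℝ) (j : n) (c : m) :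
    (M * B * M) j c = ∑ a, ∑ b, B a b * (M j a * M b c) := by
  simp only [mul_apply, Finset.sum_mul]
  rw [Finset.sum_comm]
  exact Finset.sum_congr rfl fun _ _ => Finset.sum_congr rfl fun _ _ => by ring

lemma integrable_mul_mul_apply (hX : ∀ i a, MemLp (fun ω => X i ω a) 2 μ)
    (B : Matrix m n ℝ) (j : n) (c : m) :
    Integrable (fun ω => (of (fun i => X i ω) * B * of (fun i => X i ω)) j c) μ := by
  simp only [mul_mul_apply_eq_sum, of_apply]
  exact integrable_finsetSum _ fun a _ => integrable_finsetSum _ fun b _ =>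
    (integrable_mul_apply hX j b a c).const_mul _

lemma sum_single_one_mul [DecidableEq n] {l : Type*} (N : n → Matrix n l ℝ) :
    ∑ i, single i i (1 : ℝ) * N i = of fun j k => N j j k := by
  ext j k
  rw [Matrix.sum_apply, Finset.sum_eq_single j, single_mul_apply_same, one_mul, of_apply]
  · exact fun i _ hij => single_mul_apply_of_ne _ _ _ _ _ (Ne.symm hij) _
  · exact fun h => absurd (Finset.mem_univ j) h

/-- Only the diagonal blocks `i = b` of `E[X_{ja} X_{bc}]` survive, by independence of distinct
centered rows. -/
lemma entrywiseIntegral_mul_mul [DecidableEq n] (hX : ∀ i a, MemLp (fun ω => X i ω a) 2 μ)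
    (hX0 : ∀ i a, ∫ ω, X i ω a ∂μ = 0) (hindep : Pairwise fun i j => IndepFun (X i) (X j) μ)
    (B : Matrix m n ℝ) :
    entrywiseIntegral μ (fun ω => of (fun i => X i ω) * B * of (fun i => X i ω))
      = ∑ i, single i i (1 : ℝ) * Bᵀ * rowCov μ X i := by
  simp_rw [Matrix.mul_assoc (single _ _ _), sum_single_one_mul]
  ext j c
  simp only [entrywiseIntegral, of_apply, mul_mul_apply_eq_sum]
  have hint : ∀ a b, Integrable (fun ω => B a b * (X j ω a * X b ω c)) μ :=
    fun a b => (integrable_mul_apply hX j b a c).const_mul _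
  rw [integral_finsetSum (f := fun a ω => ∑ b, B a b * (X j ω a * X b ω c)) _
    fun a _ => integrable_finsetSum _ fun b _ => hint a b]
  simp only [mul_apply, transpose_apply, rowCov, of_apply]
  refine Finset.sum_congr rfl fun a _ => ?_
  rw [integral_finsetSum _ fun b _ => hint a b, Finset.sum_eq_single j]
  · exact integral_const_mul _ _
  · intro b _ hbj
    rw [integral_const_mul, integral_mul_eq_zero_of_indepFun_s4 hX hX0 (hindep hbj.symm), mul_zero]
  · exact fun h => absurd (Finset.mem_univ j) h

end RowCovariance

section SquareRows

variable {Ω : Type*} [MeasurableSpace Ω] {μ : Measure Ω} {n : Type*} [Fintype n] [DecidableEq n]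
  {X : n → Ω → n → ℝ}

lemma entrywiseIntegral_sq (hX : ∀ i a, MemLp (fun ω => X i ω a) 2 μ)
    (hX0 : ∀ i a, ∫ ω, X i ω a ∂μ = 0) (hindep : Pairwise fun i j => IndepFun (X i) (X j) μ)
    (c : ℝ) (B : Matrix n n ℝ) :
    entrywiseIntegral μ (fun ω => (c • of (fun i => X i ω) * B) ^ 2)
      = c ^ 2 • ∑ i, single i i (1 : ℝ) * Bᵀ * rowCov μ X i * B := by
  have hsq : ∀ ω, (c • of (fun i => X i ω) * B) ^ 2
      = c ^ 2 • (of (fun i => X i ω) * B * of (fun i => X i ω) * B) := fun ω => by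
    simp only [pow_two, smul_mul_assoc, mul_smul_comm, smul_smul, Matrix.mul_assoc]
  simp_rw [hsq]
  rw [entrywiseIntegral_smul, entrywiseIntegral_mul_const (integrable_mul_mul_apply hX B),
    entrywiseIntegral_mul_mul hX hX0 hindep, Finset.sum_mul]

lemma entrywiseIntegral_transpose_sq (hX : ∀ i a, MemLp (fun ω => X i ω a) 2 μ)
    (hX0 : ∀ i a, ∫ ω, X i ω a ∂μ = 0) (hindep : Pairwise fun i j => IndepFun (X i) (X j) μ)
    (c : ℝ) (B : Matrix n n ℝ) :
    entrywiseIntegral μ (fun ω => (c • of (fun i => X i ω) * B)ᵀ ^ 2)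
      = c ^ 2 • ∑ i, Bᵀ * rowCov μ X i * B * single i i (1 : ℝ) := by
  simp_rw [← transpose_pow]
  rw [entrywiseIntegral_transpose, entrywiseIntegral_sq hX hX0 hindep]
  simp [transpose_sum, transpose_single, rowCov_transpose, Matrix.mul_assoc]

end SquareRows

theorem stmt4_general {N : ℕ} {Ω : Type*} [MeasurableSpace Ω] (μ : Measure Ω) [IsProbabilityMeasure μ]
    (P : Matrix (Fin N) (Fin N) ℝ)
    (γ : ℝ)
    (phat : Fin N → Ω → (Fin N → ℝ))
    (h2 : ∀ i j, MemLp (fun ω => phat i ω j) 2 μ)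
    (hmean : ∀ i j, ∫ ω, phat i ω j ∂μ = P i j)
    (hindep : ∀ i j, i ≠ j → IndepFun (phat i) (phat j) μ) :
    letI A : Matrix (Fin N) (Fin N) ℝ := 1 - γ • P
    letI Yhat : Ω → Matrix (Fin N) (Fin N) ℝ :=
      fun ω => (γ • (P - Matrix.of fun i j => phat i ω j)) * A⁻¹
    letI cov : Fin N → Matrix (Fin N) (Fin N) ℝ :=
      fun i => Matrix.of fun j k => ∫ ω, (phat i ω j - P i j) * (phat i ω k - P i k) ∂μ
    ((Matrix.of fun j k => ∫ ω, (Yhat ω ^ 2) j k ∂μ)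
        = γ ^ 2 • ∑ i, Matrix.single i i (1 : ℝ) * (A⁻¹)ᵀ * cov i * A⁻¹)
    ∧ ((Matrix.of fun j k => ∫ ω, ((Yhat ω)ᵀ ^ 2) j k ∂μ)
        = γ ^ 2 • ∑ i, (A⁻¹)ᵀ * cov i * A⁻¹ * Matrix.single i i (1 : ℝ)) := by
  set X : Fin N → Ω → Fin N → ℝ := fun i ω => phat i ω - P i
  have hX2 : ∀ i a, MemLp (fun ω => X i ω a) 2 μ := fun i a => (h2 i a).sub (memLp_const _)
  have hX0 : ∀ i a, ∫ ω, X i ω a ∂μ = 0 := fun i a => by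
    simp [X, integral_sub ((h2 i a).integrable one_le_two) (integrable_const _), hmean]
  have hXindep : Pairwise fun i j => IndepFun (X i) (X j) μ := fun i j hij =>
    (hindep i j hij).comp (measurable_id.sub_const _) (measurable_id.sub_const _)
  have hZ : ∀ ω, γ • (P - of fun i j => phat i ω j) = (-γ) • of (fun i => X i ω) := fun ω => by
    ext i j
    simp only [Matrix.smul_apply, Matrix.sub_apply, of_apply, smul_eq_mul, Pi.sub_apply, neg_mul, X]
    ring
  simp_rw [hZ, ← neg_sq γ]
  exact ⟨entrywiseIntegral_sq hX2 hX0 hXindep _ _,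
    entrywiseIntegral_transpose_sq hX2 hX0 hXindep _ _⟩

/-- In the setting of Statement 3 (`P` row-stochastic with rows `p_i`,
`γ ∈ (0,1)`, `A = I − γP`, rows `p̂_i` of `P̂` pairwise independent, square-integrable, with
mean `p_i`; `Ẑ = γ(P − P̂)`, `Ŷ = Ẑ A⁻¹`), one has
`E[Ŷ²] = γ² Σ_i diag(e_i) A⁻ᵀ cov[p̂_i] A⁻¹` and
`E[(Ŷᵀ)²] = γ² Σ_i A⁻ᵀ cov[p̂_i] A⁻¹ diag(e_i)`. -/
theorem stmt4 {N : ℕ} {Ω : Type*} [MeasurableSpace Ω] (μ : Measure Ω) [IsProbabilityMeasure μ]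
    (P : Matrix (Fin N) (Fin N) ℝ) (hP0 : ∀ i j, 0 ≤ P i j) (hP1 : ∀ i, ∑ j, P i j = 1)
    (γ : ℝ) (hγ : γ ∈ Set.Ioo (0 : ℝ) 1)
    (phat : Fin N → Ω → (Fin N → ℝ))
    (hmeas : ∀ i, Measurable (phat i))
    (h2 : ∀ i j, MemLp (fun ω => phat i ω j) 2 μ)
    (hmean : ∀ i j, ∫ ω, phat i ω j ∂μ = P i j)
    (hindep : ∀ i j, i ≠ j → IndepFun (phat i) (phat j) μ) :
    letI A : Matrix (Fin N) (Fin N) ℝ := 1 - γ • P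
    letI Yhat : Ω → Matrix (Fin N) (Fin N) ℝ :=
      fun ω => (γ • (P - Matrix.of fun i j => phat i ω j)) * A⁻¹
    letI cov : Fin N → Matrix (Fin N) (Fin N) ℝ :=
      fun i => Matrix.of fun j k => ∫ ω, (phat i ω j - P i j) * (phat i ω k - P i k) ∂μ
    ((Matrix.of fun j k => ∫ ω, (Yhat ω ^ 2) j k ∂μ)
        = γ ^ 2 • ∑ i, Matrix.single i i (1 : ℝ) * (A⁻¹)ᵀ * cov i * A⁻¹)
    ∧ ((Matrix.of fun j k => ∫ ω, ((Yhat ω)ᵀ ^ 2) j k ∂μ)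
        = γ ^ 2 • ∑ i, (A⁻¹)ᵀ * cov i * A⁻¹ * Matrix.single i i (1 : ℝ)) :=
  stmt4_general μ P γ phat h2 hmean hindep
end

section
/- Let P̂ be a random row-stochastic N×N matrix on a probability space, let γ ∈ (0,1), let P be a fixed row-stochastic matrix, and set A = I − γP, Âhat = I − γP̂, Ŷ = (A − Âhat)A^{-1} = γ(P − P̂)A^{-1}. Let b̂ be a square-integrable random vector independent of P̂ with E[b̂] = b, and let M ∈ ℝ^{N×N} be symmetric positive definite. Define v̂ = Âhat^{-1} b̂. Then: (i) E[bᵀ M A v̂] = E[bᵀ M (I − Ŷ)^{-1} b]; and (ii) E[v̂ᵀ Aᵀ M A v̂] = E[bᵀ (I − Ŷ)^{-T} M (I − Ŷ)^{-1} b] + E[tr(cov[b̂] · (I − Ŷ)^{-T} M (I − Ŷ)^{-1})], where cov[b̂] = E[(b̂ − b)(b̂ − b)ᵀ]. Consequently, whenever the denominator is nonzero, the optimal augmentation factor ε* = E[bᵀ M A v̂] / E[v̂ᵀ Aᵀ M A v̂] equals E[bᵀ M (I − Ŷ)^{-1} b] / (E[bᵀ (I − Ŷ)^{-T} M (I − Ŷ)^{-1}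 b] + E[tr(cov[b̂] (I − Ŷ)^{-T} M (I − Ŷ)^{-1})]). -/
/-! Since `1 - Ŷ = Âhat A⁻¹`, the matrix `Ĝ := (1 - Ŷ)⁻¹ = A Âhat⁻¹` satisfies `A v̂ = Ĝ b̂`,
so both expectations are expectations of a linear, respectively quadratic, form in `b̂` whose
coefficients are continuous functions of `P̂`. These coefficients are bounded: `P̂` ranges over
the compact set of row-stochastic matrices, on which `1 - γ P̂` is strictly diagonally dominant,
hence invertible. Independence then factors the expectations entrywise:
`E[Ĝᵢⱼ b̂ⱼ] = E[Ĝᵢⱼ] bⱼ` and `E[K̂ᵢⱼ b̂ᵢ b̂ⱼ] = E[K̂ᵢⱼ] (bᵢ bⱼ + cov[b̂ᵢ, b̂ⱼ])` for `K̂ = Ĝᵀ M Ĝ`. -/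

open MeasureTheory ProbabilityTheory Matrix

section LinearAlgebra

variable {n R : Type*} [Fintype n] [CommRing R]

theorem dotProduct_mulVec_eq_sum_sum (K : Matrix n n R) (x y : n → R) :
    x ⬝ᵥ (K *ᵥ y) = ∑ i, ∑ j, K i j * (x i * y j) := by
  simp only [dotProduct, mulVec, Finset.mul_sum]
  exact Finset.sum_congr rfl fun i _ => Finset.sum_congr rfl fun j _ => by ring

theorem trace_mul_eq_sum_sum_of_isSymm {C : Matrix n n R} (hC : C.IsSymm) (K : Matrix n n R) :
    (C * K).trace = ∑ i, ∑ j, C i j * K i j := by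
  conv_lhs => rw [← hC]
  simp only [trace, diag, mul_apply, transpose_apply]
  exact Finset.sum_comm

theorem mulVec_dotProduct_mulVec_mulVec (G M : Matrix n n R) (x y : n → R) :
    (G *ᵥ x) ⬝ᵥ (M *ᵥ (G *ᵥ y)) = x ⬝ᵥ ((Gᵀ * M * G) *ᵥ y) := by
  rw [← mulVec_mulVec, ← mulVec_mulVec, dotProduct_mulVec x, vecMul_transpose]

variable [DecidableEq n]

theorem inv_one_sub_sub_mul_inv {A : Matrix n n R} (hA : IsUnit A.det) (B : Matrix n n R) :
    (1 - (A - B) * A⁻¹)⁻¹ = A * B⁻¹ := by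
  rw [Matrix.sub_mul, mul_nonsing_inv _ hA, sub_sub_cancel, Matrix.mul_inv_rev,
    nonsing_inv_nonsing_inv _ hA]

theorem det_one_sub_smul_ne_zero {γ : ℝ} (hγ0 : 0 ≤ γ) (hγ1 : γ < 1) {Q : Matrix n n ℝ}
    (hQ : Q ∈ rowStochastic ℝ n) : (1 - γ • Q).det ≠ 0 := by
  refine det_ne_zero_of_sum_row_lt_diag fun k => ?_
  have hoff : ∀ j ∈ Finset.univ.erase k, ‖(1 - γ • Q) k j‖ = γ * Q k j := fun j hj => by
    rw [Matrix.sub_apply, one_apply_ne (Finset.ne_of_mem_erase hj).symm, Matrix.smul_apply,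
      smul_eq_mul, zero_sub, norm_neg,
      Real.norm_of_nonneg (mul_nonneg hγ0 (nonneg_of_mem_rowStochastic hQ))]
  have hdiag : ‖(1 - γ • Q) k k‖ = 1 - γ * Q k k := by
    rw [Matrix.sub_apply, one_apply_eq, Matrix.smul_apply, smul_eq_mul, Real.norm_of_nonneg]
    nlinarith [le_one_of_mem_rowStochastic hQ (i := k) (j := k)]
  have hrow := Finset.add_sum_erase _ (fun j => Q k j) (Finset.mem_univ k)
  rw [sum_row_of_mem_rowStochastic hQ] at hrow
  rw [Finset.sum_congr rfl hoff, ← Finset.mul_sum, hdiag]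
  nlinarith [nonneg_of_mem_rowStochastic hQ (i := k) (j := k)]

end LinearAlgebra

section Topology

variable {n : Type*} [Fintype n] [DecidableEq n]

theorem isCompact_rowStochastic : IsCompact (rowStochastic ℝ n : Set (Matrix n n ℝ)) := by
  have hbox : IsCompact (Set.univ.pi fun _ : n => Set.univ.pi fun _ : n => Set.Icc (0 : ℝ) 1) :=
    isCompact_univ_pi fun _ => isCompact_univ_pi fun _ => isCompact_Icc
  refine hbox.of_isClosed_subset ?_ fun Q hQ i _ j _ =>
    ⟨nonneg_of_mem_rowStochastic hQ, le_one_of_mem_rowStochastic hQ⟩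
  have : (rowStochastic ℝ n : Set (Matrix n n ℝ))
      = (⋂ i, ⋂ j, {Q | 0 ≤ Q i j}) ∩ {Q | Q *ᵥ 1 = 1} := by
    ext Q; simp [mem_rowStochastic]
  rw [this]
  exact (isClosed_iInter fun i => isClosed_iInter fun j =>
    isClosed_le continuous_const (continuous_id.matrix_elem i j)).inter
    (isClosed_eq (continuous_id.matrix_mulVec continuous_const) continuous_const)

variable {𝕜 X : Type*} [Field 𝕜] [TopologicalSpace 𝕜] [IsTopologicalRing 𝕜]
  [TopologicalSpace X]

theorem ContinuousOn.matrix_inv_of_det_ne_zero [ContinuousInv₀ 𝕜] {f : X → Matrix n n 𝕜}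
    (hf : Continuous f) {S : Set X} (hS : ∀ x ∈ S, (f x).det ≠ 0) :
    ContinuousOn (fun x => (f x)⁻¹) S :=
  continuousOn_of_forall_continuousAt fun x hx =>
    (continuousAt_matrix_inv _ <| by
      rw [Ring.inverse_eq_inv']; exact continuousAt_inv₀ (hS x hx)).comp hf.continuousAt

theorem Continuous.measurable_comp_matrix_inv [MeasurableSpace 𝕜] [BorelSpace 𝕜] [MeasurableInv 𝕜]
    [SecondCountableTopology 𝕜] [MeasurableSpace X] [BorelSpace X] [SecondCountableTopology X]
    {E : Type*} [TopologicalSpace E] [MeasurableSpace E] [BorelSpace E]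
    {ψ : Matrix n n 𝕜 → E} (hψ : Continuous ψ) {f : X → Matrix n n 𝕜} (hf : Continuous f) :
    Measurable fun x => ψ (f x)⁻¹ := by
  -- `x ↦ (f x)⁻¹` need not be continuous, but it is a continuous function of `((f x).det⁻¹, x)`.
  have hcont : Continuous fun p : 𝕜 × X => ψ (p.1 • (f p.2).adjugate) := by fun_prop
  have hdet : Measurable fun x => (f x).det⁻¹ := hf.matrix_det.measurable.inv
  convert hcont.measurable.comp (hdet.prodMk measurable_id) using 2 with x
  simp [inv_def, Ring.inverse_eq_inv']

end Topology

theorem integrable_comp_of_mapsTo_isCompact {Ω X E : Type*} [MeasurableSpace Ω] {μ : Measure Ω}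
    [IsFiniteMeasure μ] [TopologicalSpace X] [NormedAddCommGroup E] {S : Set X} (hS : IsCompact S)
    {φ : X → E} (hφ : ContinuousOn φ S) {Y : Ω → X} (hY : ∀ ω, Y ω ∈ S)
    (hm : AEStronglyMeasurable (fun ω => φ (Y ω)) μ) : Integrable (fun ω => φ (Y ω)) μ := by
  obtain ⟨C, hC⟩ := hS.exists_bound_of_continuousOn hφ
  exact Integrable.of_bound hm C (ae_of_all _ fun ω => hC _ (hY ω))

section Probability

variable {Ω n : Type*} [Fintype n] [MeasurableSpace Ω] {μ : Measure Ω}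

theorem integral_sum_sum {f : Ω → n → n → ℝ} (hf : ∀ i j, Integrable (fun ω => f ω i j) μ) :
    ∫ ω, ∑ i, ∑ j, f ω i j ∂μ = ∑ i, ∑ j, ∫ ω, f ω i j ∂μ := by
  rw [integral_finsetSum _ fun i _ => integrable_finsetSum _ fun j _ => hf i j]
  exact Finset.sum_congr rfl fun i _ => integral_finsetSum _ fun j _ => hf i j

theorem integral_dotProduct_of_indepFun {v x : Ω → n → ℝ} {m : n → ℝ}
    (hv : ∀ j, Integrable (fun ω => v ω j) μ) (hx : ∀ j, Integrable (fun ω => x ω j) μ)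
    (hind : ∀ j, IndepFun (fun ω => v ω j) (fun ω => x ω j) μ)
    (hm : ∀ j, ∫ ω, x ω j ∂μ = m j) :
    ∫ ω, v ω ⬝ᵥ x ω ∂μ = ∫ ω, v ω ⬝ᵥ m ∂μ := by
  have hvx : ∀ j, Integrable (fun ω => v ω j * x ω j) μ := fun j =>
    (hind j).integrable_mul (hv j) (hx j)
  simp only [dotProduct]
  rw [integral_finsetSum _ fun j _ => hvx j, integral_finsetSum _ fun j _ => (hv j).mul_const _]
  refine Finset.sum_congr rfl fun j _ => ?_
  rw [integral_mul_const, ← hm j]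
  exact (hind j).integral_mul_eq_mul_integral (hv j).aestronglyMeasurable
    (hx j).aestronglyMeasurable

theorem integral_dotProduct_mulVec_self_of_indepFun [IsProbabilityMeasure μ]
    {K : Ω → Matrix n n ℝ} {x : Ω → n → ℝ} {m : n → ℝ}
    (hK : ∀ i j, Integrable (fun ω => K ω i j) μ) (hx : ∀ i, MemLp (fun ω => x ω i) 2 μ)
    (hind : ∀ i j, IndepFun (fun ω => K ω i j) (fun ω => x ω i * x ω j) μ)
    (hm : ∀ i, ∫ ω, x ω i ∂μ = m i) :
    ∫ ω, x ω ⬝ᵥ (K ω *ᵥ x ω) ∂μ = ∫ ω, m ⬝ᵥ (K ω *ᵥ m) ∂μ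
      + ∫ ω, (of (fun i j => cov[fun ω => x ω i, fun ω => x ω j; μ]) * K ω).trace ∂μ := by
  have hC : (of fun i j => cov[fun ω => x ω i, fun ω => x ω j; μ]).IsSymm := by
    ext i j; exact covariance_comm _ _
  have hxx : ∀ i j, Integrable (fun ω => x ω i * x ω j) μ := fun i j => (hx i).integrable_mul (hx j)
  have hKxx : ∀ i j, Integrable (fun ω => K ω i j * (x ω i * x ω j)) μ := fun i j =>
    (hind i j).integrable_mul (hK i j) (hxx i j)
  have hentry : ∀ i j, ∫ ω, K ω i j * (x ω i * x ω j) ∂μ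
      = ∫ ω, K ω i j * (m i * m j) ∂μ
        + ∫ ω, cov[fun ω => x ω i, fun ω => x ω j; μ] * K ω i j ∂μ := by
    intro i j
    have hsplit : ∫ ω, K ω i j * (x ω i * x ω j) ∂μ
        = (∫ ω, K ω i j ∂μ) * ∫ ω, x ω i * x ω j ∂μ :=
      (hind i j).integral_mul_eq_mul_integral (hK i j).aestronglyMeasurable
        (hxx i j).aestronglyMeasurable
    rw [hsplit, integral_mul_const, integral_const_mul,
      covariance_eq_sub (hx i) (hx j), hm i, hm j]
    simp only [Pi.mul_apply]
    ring
  simp_rw [dotProduct_mulVec_eq_sum_sum, trace_mul_eq_sum_sum_of_isSymm hC, of_apply]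
  rw [integral_sum_sum hKxx,
    integral_sum_sum fun i j => (hK i j).mul_const _,
    integral_sum_sum fun i j => (hK i j).const_mul _, ← Finset.sum_add_distrib]
  simp_rw [← Finset.sum_add_distrib, hentry]

variable [DecidableEq n] (γ : ℝ) (A : Matrix n n ℝ) {ψ : Matrix n n ℝ → ℝ}

theorem measurable_comp_mul_inv_one_sub_smul (hψ : Continuous ψ) :
    Measurable fun q : n → n → ℝ => ψ (A * (1 - γ • of q)⁻¹) :=
  Continuous.measurable_comp_matrix_inv (ψ := fun B => ψ (A * B)) (by fun_prop)
    (f := fun q : n → n → ℝ => 1 - γ • of q) (by fun_prop)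

theorem integrable_comp_mul_inv_one_sub_smul [IsFiniteMeasure μ] {γ : ℝ} (hγ0 : 0 ≤ γ)
    (hγ1 : γ < 1) (hψ : Continuous ψ) {Q : Ω → n → n → ℝ} (hQm : Measurable Q)
    (hQ : ∀ ω, of (Q ω) ∈ rowStochastic ℝ n) :
    Integrable (fun ω => ψ (A * (1 - γ • of (Q ω))⁻¹)) μ := by
  have hcont : ContinuousOn (fun Q => ψ (A * (1 - γ • Q)⁻¹)) (rowStochastic ℝ n) :=
    hψ.comp_continuousOn (continuousOn_const.mul (ContinuousOn.matrix_inv_of_det_ne_zero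
      (by fun_prop) fun Q hQ => det_one_sub_smul_ne_zero hγ0 hγ1 hQ))
  exact integrable_comp_of_mapsTo_isCompact isCompact_rowStochastic hcont hQ
    ((measurable_comp_mul_inv_one_sub_smul γ A hψ).comp hQm).aestronglyMeasurable

end Probability

theorem stmt5_general {N : ℕ} {Ω : Type*} [MeasurableSpace Ω] (μ : Measure Ω) [IsProbabilityMeasure μ]
    (P : Matrix (Fin N) (Fin N) ℝ) (hP0 : ∀ i j, 0 ≤ P i j) (hP1 : ∀ i, ∑ j, P i j = 1)
    (γ : ℝ) (hγ : γ ∈ Set.Ioo (0 : ℝ) 1)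
    (Phat : Ω → Fin N → Fin N → ℝ) (hPhatmeas : Measurable Phat)
    (hPhat0 : ∀ ω i j, 0 ≤ Phat ω i j) (hPhat1 : ∀ ω i, ∑ j, Phat ω i j = 1)
    (bhat : Ω → (Fin N → ℝ))
    (hb2 : ∀ i, MemLp (fun ω => bhat ω i) 2 μ)
    (hindep : IndepFun bhat Phat μ)
    (b : Fin N → ℝ) (hbmean : ∀ i, ∫ ω, bhat ω i ∂μ = b i)
    (M : Matrix (Fin N) (Fin N) ℝ) :
    letI A : Matrix (Fin N) (Fin N) ℝ := 1 - γ • P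
    letI Ahat : Ω → Matrix (Fin N) (Fin N) ℝ := fun ω => 1 - γ • Matrix.of (Phat ω)
    letI Yhat : Ω → Matrix (Fin N) (Fin N) ℝ := fun ω => (A - Ahat ω) * A⁻¹
    letI vhat : Ω → Fin N → ℝ := fun ω => (Ahat ω)⁻¹ *ᵥ bhat ω
    letI covb : Matrix (Fin N) (Fin N) ℝ :=
      Matrix.of fun i j => ∫ ω, (bhat ω i - b i) * (bhat ω j - b j) ∂μ
    (∫ ω, b ⬝ᵥ (M *ᵥ (A *ᵥ vhat ω)) ∂μ
        = ∫ ω, b ⬝ᵥ (M *ᵥ ((1 - Yhat ω)⁻¹ *ᵥ b)) ∂μ)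
    ∧ (∫ ω, (A *ᵥ vhat ω) ⬝ᵥ (M *ᵥ (A *ᵥ vhat ω)) ∂μ
        = (∫ ω, ((1 - Yhat ω)⁻¹ *ᵥ b) ⬝ᵥ (M *ᵥ ((1 - Yhat ω)⁻¹ *ᵥ b)) ∂μ)
          + ∫ ω, Matrix.trace (covb * (((1 - Yhat ω)⁻¹)ᵀ * M * (1 - Yhat ω)⁻¹)) ∂μ)
    ∧ ((∫ ω, (A *ᵥ vhat ω) ⬝ᵥ (M *ᵥ (A *ᵥ vhat ω)) ∂μ) ≠ 0 →
        (∫ ω, b ⬝ᵥ (M *ᵥ (A *ᵥ vhat ω)) ∂μ)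
            / (∫ ω, (A *ᵥ vhat ω) ⬝ᵥ (M *ᵥ (A *ᵥ vhat ω)) ∂μ)
          = (∫ ω, b ⬝ᵥ (M *ᵥ ((1 - Yhat ω)⁻¹ *ᵥ b)) ∂μ)
            / ((∫ ω, ((1 - Yhat ω)⁻¹ *ᵥ b) ⬝ᵥ (M *ᵥ ((1 - Yhat ω)⁻¹ *ᵥ b)) ∂μ)
              + ∫ ω, Matrix.trace (covb * (((1 - Yhat ω)⁻¹)ᵀ * M * (1 - Yhat ω)⁻¹)) ∂μ)) := by
  set A : Matrix (Fin N) (Fin N) ℝ := 1 - γ • P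
  have hA : IsUnit A.det :=
    (det_one_sub_smul_ne_zero hγ.1.le hγ.2 (mem_rowStochastic_iff_sum.2 ⟨hP0, hP1⟩)).isUnit
  have hQ : ∀ ω, of (Phat ω) ∈ rowStochastic ℝ (Fin N) := fun ω =>
    mem_rowStochastic_iff_sum.2 ⟨hPhat0 ω, hPhat1 ω⟩
  set G : Ω → Matrix (Fin N) (Fin N) ℝ := fun ω => A * (1 - γ • of (Phat ω))⁻¹
  have hGinv : ∀ ω, (1 - (A - (1 - γ • of (Phat ω))) * A⁻¹)⁻¹ = G ω := fun ω =>
    inv_one_sub_sub_mul_inv hA _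
  have hGv : ∀ ω, A *ᵥ ((1 - γ • of (Phat ω))⁻¹ *ᵥ bhat ω) = G ω *ᵥ bhat ω := fun ω =>
    mulVec_mulVec _ _ _
  have hG : ∀ ψ : Matrix (Fin N) (Fin N) ℝ → ℝ, Continuous ψ →
      Integrable (fun ω => ψ (G ω)) μ ∧ ∀ g : (Fin N → ℝ) → ℝ, Measurable g →
        IndepFun (fun ω => ψ (G ω)) (fun ω => g (bhat ω)) μ := by
    intro ψ hψ
    exact ⟨integrable_comp_mul_inv_one_sub_smul A hγ.1.le hγ.2 hψ hPhatmeas hQ, fun g hg =>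
      hindep.symm.comp (measurable_comp_mul_inv_one_sub_smul γ A hψ) hg⟩
  have hcov : (of fun i j => ∫ ω, (bhat ω i - b i) * (bhat ω j - b j) ∂μ)
      = of fun i j => cov[fun ω => bhat ω i, fun ω => bhat ω j; μ] := by
    ext i j; simp only [of_apply, covariance, hbmean]
  have hmean : ∫ ω, b ⬝ᵥ (M *ᵥ (G ω *ᵥ bhat ω)) ∂μ = ∫ ω, b ⬝ᵥ (M *ᵥ (G ω *ᵥ b)) ∂μ := by
    simp only [dotProduct_mulVec]
    have hv : ∀ j, Continuous fun B : Matrix (Fin N) (Fin N) ℝ => (b ᵥ* M ᵥ* B) j := by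
      intro j; fun_prop
    exact integral_dotProduct_of_indepFun (fun j => (hG _ (hv j)).1)
      (fun j => (hb2 j).integrable one_le_two)
      (fun j => (hG _ (hv j)).2 _ (measurable_pi_apply j)) hbmean
  have hsecond : ∫ ω, (G ω *ᵥ bhat ω) ⬝ᵥ (M *ᵥ (G ω *ᵥ bhat ω)) ∂μ
      = ∫ ω, (G ω *ᵥ b) ⬝ᵥ (M *ᵥ (G ω *ᵥ b)) ∂μ
        + ∫ ω, (of (fun i j => cov[fun ω => bhat ω i, fun ω => bhat ω j; μ])
            * ((G ω)ᵀ * M * G ω)).trace ∂μ := by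
    simp only [mulVec_dotProduct_mulVec_mulVec]
    have hK : ∀ i j, Continuous fun B : Matrix (Fin N) (Fin N) ℝ => (Bᵀ * M * B) i j := by
      intro i j; fun_prop
    exact integral_dotProduct_mulVec_self_of_indepFun (fun i j => (hG _ (hK i j)).1) hb2
      (fun i j => (hG _ (hK i j)).2 (fun v => v i * v j) (by fun_prop)) hbmean
  simp only [hGinv, hGv, hcov]
  exact ⟨hmean, hsecond, fun _ => by rw [hmean, hsecond]⟩

/-- Let `P̂` be a random row-stochastic `N×N` matrix, `γ ∈ (0,1)`, `P` a fixed
row-stochastic matrix, `A = I − γP`, `Âhat = I − γP̂`, `Ŷ = (A − Âhat)A⁻¹ = γ(P − P̂)A⁻¹`.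
Let `b̂` be a square-integrable random vector independent of `P̂` with `E[b̂] = b`, and let `M`
be symmetric positive definite. Define `v̂ = Âhat⁻¹ b̂`. Then:
(i)  `E[bᵀ M A v̂] = E[bᵀ M (I − Ŷ)⁻¹ b]`;
(ii) `E[v̂ᵀ Aᵀ M A v̂] = E[bᵀ (I − Ŷ)⁻ᵀ M (I − Ŷ)⁻¹ b] + E[tr(cov[b̂] (I − Ŷ)⁻ᵀ M (I − Ŷ)⁻¹)]`;
and consequently, whenever the denominator is nonzero, the optimal augmentation factor
`ε* = E[bᵀ M A v̂] / E[v̂ᵀ Aᵀ M A v̂]` equals the corresponding ratio. -/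
theorem stmt5 {N : ℕ} {Ω : Type*} [MeasurableSpace Ω] (μ : Measure Ω) [IsProbabilityMeasure μ]
    (P : Matrix (Fin N) (Fin N) ℝ) (hP0 : ∀ i j, 0 ≤ P i j) (hP1 : ∀ i, ∑ j, P i j = 1)
    (γ : ℝ) (hγ : γ ∈ Set.Ioo (0 : ℝ) 1)
    (Phat : Ω → Fin N → Fin N → ℝ) (hPhatmeas : Measurable Phat)
    (hPhat0 : ∀ ω i j, 0 ≤ Phat ω i j) (hPhat1 : ∀ ω i, ∑ j, Phat ω i j = 1)
    (bhat : Ω → (Fin N → ℝ)) (hbmeas : Measurable bhat)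
    (hb2 : ∀ i, MemLp (fun ω => bhat ω i) 2 μ)
    (hindep : IndepFun bhat Phat μ)
    (b : Fin N → ℝ) (hbmean : ∀ i, ∫ ω, bhat ω i ∂μ = b i)
    (M : Matrix (Fin N) (Fin N) ℝ) (hM : M.PosDef) :
    letI A : Matrix (Fin N) (Fin N) ℝ := 1 - γ • P
    letI Ahat : Ω → Matrix (Fin N) (Fin N) ℝ := fun ω => 1 - γ • Matrix.of (Phat ω)
    letI Yhat : Ω → Matrix (Fin N) (Fin N) ℝ := fun ω => (A - Ahat ω) * A⁻¹
    letI vhat : Ω → Fin N → ℝ := fun ω => (Ahat ω)⁻¹ *ᵥ bhat ω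
    letI covb : Matrix (Fin N) (Fin N) ℝ :=
      Matrix.of fun i j => ∫ ω, (bhat ω i - b i) * (bhat ω j - b j) ∂μ
    (∫ ω, b ⬝ᵥ (M *ᵥ (A *ᵥ vhat ω)) ∂μ
        = ∫ ω, b ⬝ᵥ (M *ᵥ ((1 - Yhat ω)⁻¹ *ᵥ b)) ∂μ)
    ∧ (∫ ω, (A *ᵥ vhat ω) ⬝ᵥ (M *ᵥ (A *ᵥ vhat ω)) ∂μ
        = (∫ ω, ((1 - Yhat ω)⁻¹ *ᵥ b) ⬝ᵥ (M *ᵥ ((1 - Yhat ω)⁻¹ *ᵥ b)) ∂μ)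
          + ∫ ω, Matrix.trace (covb * (((1 - Yhat ω)⁻¹)ᵀ * M * (1 - Yhat ω)⁻¹)) ∂μ)
    ∧ ((∫ ω, (A *ᵥ vhat ω) ⬝ᵥ (M *ᵥ (A *ᵥ vhat ω)) ∂μ) ≠ 0 →
        (∫ ω, b ⬝ᵥ (M *ᵥ (A *ᵥ vhat ω)) ∂μ)
            / (∫ ω, (A *ᵥ vhat ω) ⬝ᵥ (M *ᵥ (A *ᵥ vhat ω)) ∂μ)
          = (∫ ω, b ⬝ᵥ (M *ᵥ ((1 - Yhat ω)⁻¹ *ᵥ b)) ∂μ)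
            / ((∫ ω, ((1 - Yhat ω)⁻¹ *ᵥ b) ⬝ᵥ (M *ᵥ ((1 - Yhat ω)⁻¹ *ᵥ b)) ∂μ)
              + ∫ ω, Matrix.trace (covb * (((1 - Yhat ω)⁻¹)ᵀ * M * (1 - Yhat ω)⁻¹)) ∂μ)) :=
  stmt5_general μ P hP0 hP1 γ hγ Phat hPhatmeas hPhat0 hPhat1 bhat hb2 hindep b hbmean M
end

section
/- Let P ∈ ℝ^{N×N} be row-stochastic with rows p_1ᵀ, …, p_Nᵀ, γ ∈ (0,1), n a positive integer, A = I − γP, B_i = (1/n)(diag(p_i) − p_i p_iᵀ), G = γ² A^{-T}(Σ_{i=1}^{N} B_i)A^{-1}, H = γ²(Σ_{i=1}^{N} A^{-T} B_i A^{-1} diag(e_i)) + γ²(Σ_{i=1}^{N} diag(e_i) A^{-T} B_i A^{-1}), and for b ∈ ℝ^N, b ≠ 0, and symmetric positive semidefinite Σ ∈ ℝ^{N×N} define θ(b,P) = bᵀ(I + H/2)b / (bᵀ(I + G + H)b + tr(Σ(I + G + H))). If n ≥ 16γ²/(1 − γ)², then θ(b,P) ≤ 1 + (8γ²/(1 − γ)²)·(1/n).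 -/
/-!
Put `ε = γ² / ((1 - γ)² n)`, so that `ε ≤ 1/16`. Each `Bᵢ` is `1/n` times the covariance matrix
of a one-hot vector drawn from `pᵢ`, hence positive semidefinite, and so is `G`. The quadratic
form of `H` is `2γ² ∑ᵢ (vᵢ zᵢ)ᵀ Bᵢ (A⁻¹ v)`, where `zᵢ` is the `i`-th column of `A⁻¹`. By AM-GM
for the semi-inner product `Bᵢ`, and since `zᵢᵀ Bᵢ zᵢ ≤ ‖zᵢ‖∞² / n ≤ 1 / ((1 - γ)² n)` (because
`(1 - γ)‖x‖∞ ≤ ‖A x‖∞`), we get `|vᵀ H v| ≤ 2ε vᵀv + ½ vᵀ G v`. Hence `I + G + H` has a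
nonnegative quadratic form, the trace term is nonnegative, and what is left is an inequality
between real numbers.
-/

open Matrix

variable {ι : Type*}

section Stochastic

variable [Fintype ι] {P : Matrix ι ι ℝ}

theorem norm_mulVec_le_of_stochastic (hP0 : ∀ i j, 0 ≤ P i j) (hP1 : ∀ i, ∑ j, P i j = 1)
    (x : ι → ℝ) : ‖P *ᵥ x‖ ≤ ‖x‖ := by
  refine (pi_norm_le_iff_of_nonneg (norm_nonneg x)).mpr fun i => ?_
  calc ‖(P *ᵥ x) i‖ = |∑ j, P i j * x j| := rfl
    _ ≤ ∑ j, |P i j * x j| := Finset.abs_sum_le_sum_abs _ _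
    _ ≤ ∑ j, P i j * ‖x‖ := Finset.sum_le_sum fun j _ => by
        rw [abs_mul, abs_of_nonneg (hP0 i j)]
        exact mul_le_mul_of_nonneg_left (norm_le_pi_norm x j) (hP0 i j)
    _ = ‖x‖ := by rw [← Finset.sum_mul, hP1, one_mul]

variable [DecidableEq ι]

theorem one_sub_mul_norm_le_norm_one_sub_smul_mulVec (hP0 : ∀ i j, 0 ≤ P i j)
    (hP1 : ∀ i, ∑ j, P i j = 1) {γ : ℝ} (hγ : 0 ≤ γ) (x : ι → ℝ) :
    (1 - γ) * ‖x‖ ≤ ‖(1 - γ • P) *ᵥ x‖ := by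
  have hx : x = (1 - γ • P) *ᵥ x + γ • (P *ᵥ x) := by
    rw [sub_mulVec, one_mulVec, smul_mulVec, sub_add_cancel]
  have : ‖x‖ ≤ ‖(1 - γ • P) *ᵥ x‖ + γ * ‖x‖ :=
    calc ‖x‖ = ‖(1 - γ • P) *ᵥ x + γ • (P *ᵥ x)‖ := by rw [← hx]
      _ ≤ ‖(1 - γ • P) *ᵥ x‖ + ‖γ • (P *ᵥ x)‖ := norm_add_le _ _
      _ ≤ ‖(1 - γ • P) *ᵥ x‖ + γ * ‖x‖ := by
        rw [norm_smul, Real.norm_of_nonneg hγ]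
        gcongr
        exact norm_mulVec_le_of_stochastic hP0 hP1 x
  linarith

theorem isUnit_det_one_sub_smul (hP0 : ∀ i j, 0 ≤ P i j) (hP1 : ∀ i, ∑ j, P i j = 1) {γ : ℝ}
    (hγ : γ ∈ Set.Ico 0 1) : IsUnit (1 - γ • P).det := by
  refine isUnit_iff_ne_zero.mpr fun hdet => ?_
  obtain ⟨v, hv, hAv⟩ := exists_mulVec_eq_zero_iff.mpr hdet
  have h := one_sub_mul_norm_le_norm_one_sub_smul_mulVec hP0 hP1 hγ.1 v
  rw [hAv, norm_zero, ← mul_zero (1 - γ)] at h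
  exact hv (norm_le_zero_iff.mp (le_of_mul_le_mul_left h (sub_pos.mpr hγ.2)))

theorem norm_col_inv_one_sub_smul_le (hP0 : ∀ i j, 0 ≤ P i j) (hP1 : ∀ i, ∑ j, P i j = 1)
    {γ : ℝ} (hγ : γ ∈ Set.Ico 0 1) (i : ι) : ‖(1 - γ • P)⁻¹.col i‖ ≤ (1 - γ)⁻¹ := by
  have h := one_sub_mul_norm_le_norm_one_sub_smul_mulVec hP0 hP1 hγ.1
    ((1 - γ • P)⁻¹ *ᵥ Pi.single i 1)
  rw [mulVec_mulVec, mul_nonsing_inv _ (isUnit_det_one_sub_smul hP0 hP1 hγ), one_mulVec,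
    Pi.norm_single, norm_one, mulVec_single_one] at h
  rwa [inv_eq_one_div (1 - γ), le_div_iff₀' (sub_pos.mpr hγ.2)]

end Stochastic

section Covariance

variable [DecidableEq ι] {p : ι → ℝ}

/-- The covariance matrix of the one-hot vector `e_J` of a random index `J` with law `p`. -/
def covMatrix (p : ι → ℝ) : Matrix ι ι ℝ :=
  diagonal p - vecMulVec p p

theorem covMatrix_isHermitian (p : ι → ℝ) : (covMatrix p).IsHermitian := by
  rw [IsHermitian, conjTranspose_eq_transpose_of_trivial, covMatrix, transpose_sub,
    diagonal_transpose, transpose_vecMulVec]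

variable [Fintype ι]

theorem dotProduct_covMatrix_mulVec (p v : ι → ℝ) :
    v ⬝ᵥ (covMatrix p *ᵥ v) = ∑ j, p j * v j ^ 2 - (∑ j, p j * v j) ^ 2 := by
  rw [covMatrix, sub_mulVec, dotProduct_sub]
  congr 1
  · simp only [dotProduct, mulVec_diagonal]
    exact Finset.sum_congr rfl fun j _ => by ring
  · simp only [dotProduct, mulVec, vecMulVec_apply, sq, Finset.sum_mul, Finset.mul_sum]
    exact Finset.sum_congr rfl fun i _ => Finset.sum_congr rfl fun j _ => by ring

theorem posSemidef_covMatrix (hp0 : ∀ j, 0 ≤ p j) (hp1 : ∑ j, p j = 1) :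
    (covMatrix p).PosSemidef :=
  .of_dotProduct_mulVec_nonneg (covMatrix_isHermitian p) fun v => by
    rw [star_trivial, dotProduct_covMatrix_mulVec, sub_nonneg]
    simpa only [smul_eq_mul] using (even_two.convexOn_pow (𝕜 := ℝ)).map_sum_le
      (fun j _ => hp0 j) hp1 (fun j _ => Set.mem_univ (v j))

theorem dotProduct_covMatrix_mulVec_le (hp0 : ∀ j, 0 ≤ p j) (hp1 : ∑ j, p j = 1) (v : ι → ℝ) :
    v ⬝ᵥ (covMatrix p *ᵥ v) ≤ ‖v‖ ^ 2 := by
  rw [dotProduct_covMatrix_mulVec]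
  calc ∑ j, p j * v j ^ 2 - (∑ j, p j * v j) ^ 2 ≤ ∑ j, p j * v j ^ 2 :=
        sub_le_self _ (sq_nonneg _)
    _ ≤ ∑ j, p j * ‖v‖ ^ 2 := Finset.sum_le_sum fun j _ => by
        refine mul_le_mul_of_nonneg_left ?_ (hp0 j)
        rw [← sq_abs, ← Real.norm_eq_abs]
        exact pow_le_pow_left₀ (norm_nonneg _) (norm_le_pi_norm v j) 2
    _ = ‖v‖ ^ 2 := by rw [← Finset.sum_mul, hp1, one_mul]

theorem dotProduct_covMatrix_mulVec_col_inv_le {P : Matrix ι ι ℝ} (hP0 : ∀ i j, 0 ≤ P i j)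
    (hP1 : ∀ i, ∑ j, P i j = 1) {γ : ℝ} (hγ : γ ∈ Set.Ico 0 1) (i : ι) :
    (1 - γ • P)⁻¹.col i ⬝ᵥ (covMatrix (P i) *ᵥ (1 - γ • P)⁻¹.col i) ≤ ((1 - γ) ^ 2)⁻¹ := by
  rw [← inv_pow]
  exact (dotProduct_covMatrix_mulVec_le (hP0 i) (hP1 i) _).trans
    (pow_le_pow_left₀ (norm_nonneg _) (norm_col_inv_one_sub_smul_le hP0 hP1 hγ i) 2)

end Covariance

section QuadraticForms

variable [Fintype ι]

theorem dotProduct_mulVec_comm_of_isSymm {R : Type*} [CommSemiring R] {B : Matrix ι ι R}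
    (hB : B.IsSymm) (x y : ι → R) : x ⬝ᵥ (B *ᵥ y) = y ⬝ᵥ (B *ᵥ x) := by
  rw [dotProduct_mulVec, ← mulVec_transpose, hB, dotProduct_comm]

theorem dotProduct_transpose_mul_mul_mulVec {R : Type*} [CommSemiring R] (M B : Matrix ι ι R)
    (v w : ι → R) : v ⬝ᵥ ((Mᵀ * B * M) *ᵥ w) = (M *ᵥ v) ⬝ᵥ (B *ᵥ (M *ᵥ w)) := by
  rw [← mulVec_mulVec, ← mulVec_mulVec, dotProduct_mulVec, vecMul_transpose]

theorem abs_dotProduct_mulVec_le_of_posSemidef {B : Matrix ι ι ℝ} (hB : B.PosSemidef)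
    (x y : ι → ℝ) : |x ⬝ᵥ (B *ᵥ y)| ≤ x ⬝ᵥ (B *ᵥ x) + 4⁻¹ * (y ⬝ᵥ (B *ᵥ y)) := by
  have expand : ∀ c : ℝ, (c • x + y) ⬝ᵥ (B *ᵥ (c • x + y))
      = c ^ 2 * (x ⬝ᵥ (B *ᵥ x)) + 2 * c * (x ⬝ᵥ (B *ᵥ y)) + y ⬝ᵥ (B *ᵥ y) := fun c => by
    simp only [mulVec_add, mulVec_smul, dotProduct_add, add_dotProduct, smul_dotProduct,
      dotProduct_smul, smul_eq_mul]
    rw [dotProduct_mulVec_comm_of_isSymm (isHermitian_iff_isSymm.mp hB.isHermitian) y x]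
    ring
  have hplus := hB.dotProduct_mulVec_nonneg ((2 : ℝ) • x + y)
  have hminus := hB.dotProduct_mulVec_nonneg ((-2 : ℝ) • x + y)
  rw [star_trivial, expand] at hplus hminus
  rw [abs_le]
  constructor <;> nlinarith

theorem trace_mul_nonneg_of_posSemidef {S M : Matrix ι ι ℝ} (hS : S.PosSemidef)
    (hM : ∀ v, 0 ≤ v ⬝ᵥ (M *ᵥ v)) : 0 ≤ (S * M).trace := by
  obtain ⟨m, v, rfl⟩ := posSemidef_iff_eq_sum_vecMulVec.mp hS
  rw [Finset.sum_mul, trace_sum]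
  refine Finset.sum_nonneg fun k _ => ?_
  rw [vecMulVec_mul, trace_vecMulVec, star_trivial, dotProduct_comm, ← dotProduct_mulVec]
  exact hM (v k)

variable [DecidableEq ι] {R : Type*} [CommRing R]

theorem dotProduct_mul_single_mulVec (X : Matrix ι ι R) (i : ι) (v : ι → R) :
    v ⬝ᵥ ((X * single i i 1) *ᵥ v) = v i * (v ⬝ᵥ X.col i) := by
  rw [← mulVec_mulVec, single_mulVec_eq, one_mul, mulVec_smul, mulVec_single_one, dotProduct_smul,
    smul_eq_mul]

theorem dotProduct_single_mul_mulVec (X : Matrix ι ι R) (i : ι) (v : ι → R) :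
    v ⬝ᵥ ((single i i 1 * X) *ᵥ v) = v i * (X *ᵥ v) i := by
  rw [← mulVec_mulVec, single_mulVec_eq, one_mul, dotProduct_smul, dotProduct_single, mul_one,
    smul_eq_mul, mul_comm]

theorem dotProduct_symmetrized_mulVec (M : Matrix ι ι R) {B : ι → Matrix ι ι R}
    (hB : ∀ i, (B i).IsSymm) (v : ι → R) :
    v ⬝ᵥ ((∑ i, Mᵀ * B i * M * single i i 1 + ∑ i, single i i 1 * Mᵀ * B i * M) *ᵥ v)
      = 2 * ∑ i, v i * (M.col i ⬝ᵥ (B i *ᵥ (M *ᵥ v))) := by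
  rw [add_mulVec, dotProduct_add, sum_mulVec, sum_mulVec, dotProduct_sum, dotProduct_sum, two_mul]
  congr 1 <;> refine Finset.sum_congr rfl fun i _ => ?_
  · rw [dotProduct_mul_single_mulVec, ← mulVec_single_one, dotProduct_transpose_mul_mul_mulVec,
      dotProduct_mulVec_comm_of_isSymm (hB i), mulVec_single_one]
  · rw [Matrix.mul_assoc, Matrix.mul_assoc, dotProduct_single_mul_mulVec, ← mulVec_single_one,
      ← dotProduct_transpose_mul_mul_mulVec, single_dotProduct, one_mul, Matrix.mul_assoc]

theorem abs_dotProduct_symmetrized_mulVec_le (M : Matrix ι ι ℝ) {B : ι → Matrix ι ι ℝ}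
    (hB : ∀ i, (B i).PosSemidef) {c : ℝ} (hc : ∀ i, M.col i ⬝ᵥ (B i *ᵥ M.col i) ≤ c)
    (v : ι → ℝ) :
    |v ⬝ᵥ ((∑ i, Mᵀ * B i * M * single i i 1 + ∑ i, single i i 1 * Mᵀ * B i * M) *ᵥ v)|
      ≤ 2 * c * (v ⬝ᵥ v) + 2⁻¹ * (v ⬝ᵥ ((Mᵀ * (∑ i, B i) * M) *ᵥ v)) := by
  set w := M *ᵥ v
  have hterm : ∀ i, |v i * (M.col i ⬝ᵥ (B i *ᵥ w))|
      ≤ c * (v i * v i) + 4⁻¹ * (w ⬝ᵥ (B i *ᵥ w)) := fun i => by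
    rw [← smul_eq_mul, ← smul_dotProduct]
    refine (abs_dotProduct_mulVec_le_of_posSemidef (hB i) _ _).trans ?_
    rw [mulVec_smul, smul_dotProduct, dotProduct_smul, smul_eq_mul, smul_eq_mul, ← mul_assoc,
      mul_comm c]
    gcongr
    exacts [mul_self_nonneg _, hc i]
  rw [dotProduct_symmetrized_mulVec M (fun i => isHermitian_iff_isSymm.mp (hB i).isHermitian),
    dotProduct_transpose_mul_mul_mulVec, sum_mulVec, dotProduct_sum, abs_mul, abs_two]
  calc 2 * |∑ i, v i * (M.col i ⬝ᵥ (B i *ᵥ w))|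
      ≤ 2 * ∑ i, (c * (v i * v i) + 4⁻¹ * (w ⬝ᵥ (B i *ᵥ w))) := by
        gcongr
        exact (Finset.abs_sum_le_sum_abs _ _).trans (Finset.sum_le_sum fun i _ => hterm i)
    _ = 2 * c * (v ⬝ᵥ v) + 2⁻¹ * ∑ i, w ⬝ᵥ (B i *ᵥ w) := by
        rw [Finset.sum_add_distrib, ← Finset.mul_sum, ← Finset.mul_sum]
        unfold dotProduct
        ring

end QuadraticForms

theorem div_le_one_add_eight_mul_of_abs_le {Q g h T ε : ℝ} (hQ : 0 < Q) (hg : 0 ≤ g)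
    (hT : 0 ≤ T) (hε0 : 0 ≤ ε) (hε : ε ≤ 1 / 16) (hh : |h| ≤ 2 * ε * Q + 2⁻¹ * g) :
    (Q + 2⁻¹ * h) / (Q + g + h + T) ≤ 1 + 8 * ε := by
  have hlow := neg_le_of_abs_le hh
  have hden : 0 < Q + g + h + T := by nlinarith
  rw [div_le_iff₀ hden]
  nlinarith [mul_nonneg (mul_nonneg hε0 (by linarith : 0 ≤ 7 - 16 * ε)) hQ.le,
    mul_nonneg (by linarith : 0 ≤ 2⁻¹ + 8 * ε) (by linarith : 0 ≤ h + (2 * ε * Q + 2⁻¹ * g)),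
    mul_nonneg hε0 hg, mul_nonneg hε0 hT]

theorem dotProduct_div_le_one_add_eight_mul [Fintype ι] [DecidableEq ι]
    {G H S : Matrix ι ι ℝ} {ε : ℝ} (hG : G.PosSemidef)
    (hH : ∀ v, |v ⬝ᵥ (H *ᵥ v)| ≤ 2 * ε * (v ⬝ᵥ v) + 2⁻¹ * (v ⬝ᵥ (G *ᵥ v)))
    (hε0 : 0 ≤ ε) (hε : ε ≤ 1 / 16) (hS : S.PosSemidef) {b : ι → ℝ} (hb : b ≠ 0) :
    b ⬝ᵥ ((1 + (2 : ℝ)⁻¹ • H) *ᵥ b) / (b ⬝ᵥ ((1 + G + H) *ᵥ b) + (S * (1 + G + H)).trace)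
      ≤ 1 + 8 * ε := by
  have hGv : ∀ v, 0 ≤ v ⬝ᵥ (G *ᵥ v) := fun v => by
    simpa only [star_trivial] using hG.dotProduct_mulVec_nonneg v
  have hQ : ∀ v : ι → ℝ, 0 ≤ v ⬝ᵥ v := fun v => by
    simpa only [star_trivial] using dotProduct_star_self_nonneg v
  have expand : ∀ v, v ⬝ᵥ ((1 + G + H) *ᵥ v) = v ⬝ᵥ v + v ⬝ᵥ (G *ᵥ v) + v ⬝ᵥ (H *ᵥ v) :=
    fun v => by rw [add_mulVec, add_mulVec, one_mulVec, dotProduct_add, dotProduct_add]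
  have hT : 0 ≤ (S * (1 + G + H)).trace := trace_mul_nonneg_of_posSemidef hS fun v => by
    rw [expand]
    nlinarith [neg_le_of_abs_le (hH v), hGv v, hQ v, mul_le_mul_of_nonneg_right hε (hQ v)]
  rw [add_mulVec, one_mulVec, smul_mulVec, dotProduct_add, dotProduct_smul, smul_eq_mul, expand]
  exact div_le_one_add_eight_mul_of_abs_le
    (by simpa only [star_trivial] using dotProduct_star_self_pos_iff.mpr hb) (hGv b) hT hε0 hε
    (hH b)

theorem stmt11_general {N : ℕ}
    (P : Matrix (Fin N) (Fin N) ℝ) (hP0 : ∀ i j, 0 ≤ P i j) (hP1 : ∀ i, ∑ j, P i j = 1)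
    (γ : ℝ) (hγ : γ ∈ Set.Ioo (0 : ℝ) 1)
    (n : ℕ)
    (b : Fin N → ℝ) (hb : b ≠ 0)
    (S : Matrix (Fin N) (Fin N) ℝ) (hS : S.PosSemidef)
    (hsample : 16 * γ ^ 2 / (1 - γ) ^ 2 ≤ (n : ℝ)) :
    letI A : Matrix (Fin N) (Fin N) ℝ := 1 - γ • P
    letI B : Fin N → Matrix (Fin N) (Fin N) ℝ :=
      fun i => (n : ℝ)⁻¹ • (Matrix.diagonal (P i) - Matrix.vecMulVec (P i) (P i))
    letI G : Matrix (Fin N) (Fin N) ℝ := γ ^ 2 • ((A⁻¹)ᵀ * (∑ i, B i) * A⁻¹)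
    letI H : Matrix (Fin N) (Fin N) ℝ :=
      γ ^ 2 • (∑ i, (A⁻¹)ᵀ * B i * A⁻¹ * Matrix.single i i (1 : ℝ))
        + γ ^ 2 • (∑ i, Matrix.single i i (1 : ℝ) * (A⁻¹)ᵀ * B i * A⁻¹)
    (b ⬝ᵥ ((1 + (2 : ℝ)⁻¹ • H) *ᵥ b))
        / (b ⬝ᵥ ((1 + G + H) *ᵥ b) + Matrix.trace (S * (1 + G + H)))
      ≤ 1 + 8 * γ ^ 2 / (1 - γ) ^ 2 * (1 / n) := by
  obtain ⟨hγ0, hγ1⟩ := hγ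
  set ε := γ ^ 2 / (1 - γ) ^ 2 * (n : ℝ)⁻¹ with hε_def
  have hε : ε ≤ 1 / 16 := by
    have hn : (0 : ℝ) < n := lt_of_lt_of_le (by positivity) hsample
    rw [hε_def, ← div_eq_mul_inv, div_le_iff₀ hn]
    rw [mul_div_assoc] at hsample
    linarith
  have hB : ∀ i, ((n : ℝ)⁻¹ • covMatrix (P i)).PosSemidef := fun i =>
    (posSemidef_covMatrix (hP0 i) (hP1 i)).smul (inv_nonneg.mpr n.cast_nonneg)
  have hc : ∀ i, (1 - γ • P)⁻¹.col i ⬝ᵥ (((n : ℝ)⁻¹ • covMatrix (P i)) *ᵥ (1 - γ • P)⁻¹.col i)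
      ≤ (n : ℝ)⁻¹ * ((1 - γ) ^ 2)⁻¹ := fun i => by
    rw [smul_mulVec, dotProduct_smul, smul_eq_mul]
    gcongr
    exact dotProduct_covMatrix_mulVec_col_inv_le hP0 hP1 ⟨hγ0.le, hγ1⟩ i
  rw [show 1 + 8 * γ ^ 2 / (1 - γ) ^ 2 * (1 / n) = 1 + 8 * ε by ring]
  refine dotProduct_div_le_one_add_eight_mul ?_ (fun v => ?_) (by positivity) hε hS hb
  · refine PosSemidef.smul ?_ (sq_nonneg γ)
    have := (posSemidef_sum Finset.univ fun i _ => hB i).conjTranspose_mul_mul_same (1 - γ • P)⁻¹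
    rwa [conjTranspose_eq_transpose_of_trivial] at this
  · simp only [← smul_add, smul_mulVec, dotProduct_smul, smul_eq_mul, abs_mul, abs_pow,
      abs_of_pos hγ0]
    refine (mul_le_mul_of_nonneg_left (abs_dotProduct_symmetrized_mulVec_le _ hB hc v)
      (sq_nonneg γ)).trans_eq ?_
    simp only [hε_def, covMatrix]
    ring

/-- In the setting of Statement 10 (residual norm `M = I`), if
`n ≥ 16γ²/(1−γ)²`, then for `b ≠ 0` and PSD `Σ`,
`θ(b,P) ≤ 1 + (8γ²/(1−γ)²)·(1/n)`. -/
theorem stmt11 {N : ℕ}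
    (P : Matrix (Fin N) (Fin N) ℝ) (hP0 : ∀ i j, 0 ≤ P i j) (hP1 : ∀ i, ∑ j, P i j = 1)
    (γ : ℝ) (hγ : γ ∈ Set.Ioo (0 : ℝ) 1)
    (n : ℕ) (hn : 0 < n)
    (b : Fin N → ℝ) (hb : b ≠ 0)
    (S : Matrix (Fin N) (Fin N) ℝ) (hS : S.PosSemidef)
    (hsample : 16 * γ ^ 2 / (1 - γ) ^ 2 ≤ (n : ℝ)) :
    letI A : Matrix (Fin N) (Fin N) ℝ := 1 - γ • P
    letI B : Fin N → Matrix (Fin N) (Fin N) ℝ :=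
      fun i => (n : ℝ)⁻¹ • (Matrix.diagonal (P i) - Matrix.vecMulVec (P i) (P i))
    letI G : Matrix (Fin N) (Fin N) ℝ := γ ^ 2 • ((A⁻¹)ᵀ * (∑ i, B i) * A⁻¹)
    letI H : Matrix (Fin N) (Fin N) ℝ :=
      γ ^ 2 • (∑ i, (A⁻¹)ᵀ * B i * A⁻¹ * Matrix.single i i (1 : ℝ))
        + γ ^ 2 • (∑ i, Matrix.single i i (1 : ℝ) * (A⁻¹)ᵀ * B i * A⁻¹)
    (b ⬝ᵥ ((1 + (2 : ℝ)⁻¹ • H) *ᵥ b))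
        / (b ⬝ᵥ ((1 + G + H) *ᵥ b) + Matrix.trace (S * (1 + G + H)))
      ≤ 1 + 8 * γ ^ 2 / (1 - γ) ^ 2 * (1 / n) :=
  stmt11_general P hP0 hP1 γ hγ n b hb S hS hsample
end

section
/- Let P ∈ ℝ^{N×N} be row-stochastic with rows p_1ᵀ, …, p_Nᵀ, γ ∈ (0,1), n a positive integer, A = I − γP, B_i = (1/n)(diag(p_i) − p_i p_iᵀ), G = γ² A^{-T}(Σ_{i=1}^{N} B_i)A^{-1}, H = γ²(Σ_{i=1}^{N} A^{-T} B_i A^{-1} diag(e_i)) + γ²(Σ_{i=1}^{N} diag(e_i) A^{-T} B_i A^{-1}), and for b ∈ ℝ^N, b ≠ 0, and symmetric positive semidefinite Σ ∈ ℝ^{N×N} define θ(b,P) = bᵀ(I + H/2)b / (bᵀ(I + G + H)b + tr(Σ(I + G + H))). Let p_M = max_{i,j} P_{ij}, b_M = max_i |b_i|, and τ = (p_M/n)·(γ²/(1 − γ)²)·((1 − γ) + γ·√N·b_M/‖b‖₂)². If τ ≤ 1/2, then θ(b,P) ≤ 1 + τ. -/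
/-!
Put `Q = (I - γP)⁻¹`, `Mᵢ = Qᵀ Bᵢ Q` and `Eᵢ = diag(eᵢ)`. Expanding `(I + Eᵢ)ᵀ Mᵢ (I + Eᵢ)` gives
`G + H = K - D` with `K = γ² Σᵢ (I + Eᵢ)ᵀ Mᵢ (I + Eᵢ)` positive semidefinite and `D` the diagonal
matrix with entries `dᵢ = γ² (Mᵢ)ᵢᵢ ≥ 0`. Hence the numerator of `θ` is
`‖b‖² + (bᵀKb - bᵀDb - bᵀGb)/2` and the denominator is `‖b‖² + bᵀKb - bᵀDb + tr(Σ(I + G + H))`,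
where `I + G + H = (I - D) + K` is positive semidefinite as soon as `D ≤ I`. So `θ ≤ 1 + τ`
follows once `D ≤ I` and `bᵀDb ≤ τ‖b‖²` with `τ ≤ 1/2`.

Both bounds come from `(Mᵢ)ᵢᵢ ≤ (1/n) Σⱼ Pᵢⱼ Qⱼᵢ²` (a variance is at most the second moment)
and from `Q = I + γPQ = I + γQP`: the rows of `Q` have `ℓ¹`-norm at most `1/(1-γ)`, so
`|Qⱼᵢ - δⱼᵢ| ≤ γ p_M/(1-γ)`, which gives `dᵢ ≤ p_M γ²/(n(1-γ)²) ≤ τ`; and the Frobenius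
triangle inequality applied to `Q diag(b) = diag(b) + γ P Q diag(b)` gives
`Σᵢⱼ (Qⱼᵢ bᵢ)² ≤ (‖b‖ + γ √N b_M/(1-γ))²`, which is `bᵀDb ≤ τ‖b‖²`.
-/

open Matrix

open scoped ComplexOrder in
theorem Matrix.PosSemidef.trace_mul_nonneg {n 𝕜 : Type*} [Fintype n] [RCLike 𝕜]
    {A B : Matrix n n 𝕜} (hA : A.PosSemidef) (hB : B.PosSemidef) : 0 ≤ (A * B).trace := by
  classical
  open scoped MatrixOrder in
  obtain ⟨C, rfl⟩ := CStarAlgebra.nonneg_iff_eq_star_mul_self.mp hA.nonneg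
  rw [star_eq_conjTranspose, Matrix.mul_assoc, trace_mul_comm]
  exact (hB.mul_mul_conjTranspose_same C).trace_nonneg

theorem Real.sum_add_sq_le_sq_sqrt_add_sqrt {α : Type*} (s : Finset α) (f g : α → ℝ) :
    ∑ x ∈ s, (f x + g x) ^ 2 ≤ (√(∑ x ∈ s, f x ^ 2) + √(∑ x ∈ s, g x ^ 2)) ^ 2 := by
  have hf : 0 ≤ ∑ x ∈ s, f x ^ 2 := Finset.sum_nonneg fun _ _ => sq_nonneg _
  have hg : 0 ≤ ∑ x ∈ s, g x ^ 2 := Finset.sum_nonneg fun _ _ => sq_nonneg _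
  have hfg := Real.sum_mul_le_sqrt_mul_sqrt s f g
  calc ∑ x ∈ s, (f x + g x) ^ 2
      = ∑ x ∈ s, f x ^ 2 + 2 * ∑ x ∈ s, f x * g x + ∑ x ∈ s, g x ^ 2 := by
        simp only [add_sq, Finset.sum_add_distrib, Finset.mul_sum, mul_assoc]
    _ ≤ _ := by nlinarith [Real.sq_sqrt hf, Real.sq_sqrt hg]

theorem Matrix.sum_sum_add_sq_le {m n : Type*} [Fintype m] [Fintype n] (X Y : Matrix m n ℝ) :
    ∑ i, ∑ j, (X + Y) i j ^ 2 ≤ (√(∑ i, ∑ j, X i j ^ 2) + √(∑ i, ∑ j, Y i j ^ 2)) ^ 2 := by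
  simpa only [Fintype.sum_prod_type, add_apply] using Real.sum_add_sq_le_sq_sqrt_add_sqrt
    Finset.univ (fun x : m × n => X x.1 x.2) (fun x => Y x.1 x.2)

theorem sq_sum_mul_le_sum_mul_sq {ι : Type*} [Fintype ι] {p : ι → ℝ} (hp0 : ∀ j, 0 ≤ p j)
    (hp1 : ∑ j, p j = 1) (x : ι → ℝ) :
    (∑ j, p j * x j) ^ 2 ≤ ∑ j, p j * x j ^ 2 := by
  simpa only [smul_eq_mul] using (even_two.convexOn_pow).map_sum_le (t := Finset.univ)
    (fun j _ => hp0 j) hp1 (fun j _ => Set.mem_univ (x j))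

theorem sum_sq_pos_of_ne_zero {ι : Type*} [Fintype ι] {b : ι → ℝ} (hb : b ≠ 0) :
    0 < ∑ i, b i ^ 2 := by
  simpa [dotProduct, sq] using dotProduct_self_star_pos_iff.mpr hb

theorem Real.sqrt_sum_sq_le_sqrt_card_mul {ι : Type*} [Fintype ι] {b : ι → ℝ} {bM : ℝ}
    (hbM : ∀ i, |b i| ≤ bM) : √(∑ i, b i ^ 2) ≤ √(Fintype.card ι) * bM := by
  rcases isEmpty_or_nonempty ι with hι | hι
  · simp
  have hbM0 : 0 ≤ bM := (abs_nonneg _).trans (hbM (Classical.arbitrary ι))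
  rw [← Real.sqrt_sq hbM0, ← Real.sqrt_mul (Nat.cast_nonneg _)]
  gcongr
  calc ∑ i, b i ^ 2 ≤ ∑ _i : ι, bM ^ 2 :=
        Finset.sum_le_sum fun i _ => sq_le_sq' (abs_le.mp (hbM i)).1 (abs_le.mp (hbM i)).2
    _ = _ := by simp

section EmpiricalCov

variable {ι : Type*} [Fintype ι] [DecidableEq ι]

/-- Covariance matrix of the empirical frequency vector of `n` independent draws from `p`;
the paper's `Bᵢ` is `empiricalCov n (P i)`. -/
noncomputable def Matrix.empiricalCov (n : ℕ) (p : ι → ℝ) : Matrix ι ι ℝ :=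
  (n : ℝ)⁻¹ • (diagonal p - vecMulVec p p)

theorem dotProduct_diagonal_sub_vecMulVec_mulVec (p x : ι → ℝ) :
    x ⬝ᵥ (diagonal p - vecMulVec p p) *ᵥ x = ∑ j, p j * x j ^ 2 - (∑ j, p j * x j) ^ 2 := by
  rw [sub_mulVec, dotProduct_sub, vecMulVec_mulVec]
  congr 1
  · simp only [dotProduct, mulVec_diagonal]
    exact Finset.sum_congr rfl fun j _ => by ring
  · simp [dotProduct, sq, Finset.mul_sum, mul_comm, mul_left_comm]

theorem Matrix.posSemidef_empiricalCov (n : ℕ) {p : ι → ℝ} (hp0 : ∀ j, 0 ≤ p j)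
    (hp1 : ∑ j, p j = 1) : (empiricalCov n p).PosSemidef := by
  refine .smul (.of_dotProduct_mulVec_nonneg ?_ fun x => ?_) (by positivity)
  · simp [IsHermitian, conjTranspose_eq_transpose_of_trivial, transpose_sub, diagonal_transpose,
      transpose_vecMulVec]
  · rw [star_trivial, dotProduct_diagonal_sub_vecMulVec_mulVec]
    exact sub_nonneg.mpr (sq_sum_mul_le_sum_mul_sq hp0 hp1 x)

theorem Matrix.transpose_mul_empiricalCov_mul_apply_self_le (n : ℕ) (p : ι → ℝ)
    (Q : Matrix ι ι ℝ) (k : ι) :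
    (Qᵀ * empiricalCov n p * Q) k k ≤ (n : ℝ)⁻¹ * ∑ j, p j * Q j k ^ 2 := by
  rw [mul_mul_apply, empiricalCov, smul_mulVec, dotProduct_smul, smul_eq_mul]
  gcongr
  rw [dotProduct_diagonal_sub_vecMulVec_mulVec]
  exact sub_le_self _ (sq_nonneg _)

end EmpiricalCov

section SecondOrder

variable {ι : Type*} [Fintype ι] [DecidableEq ι]

theorem Matrix.transpose_one_add_single_mul_mul_one_add_single {R : Type*} [CommRing R]
    (M : Matrix ι ι R) (i : ι) :
    (1 + single i i 1)ᵀ * M * (1 + single i i 1)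
      = M + M * single i i 1 + single i i 1 * M + single i i (M i i) := by
  simp only [transpose_add, transpose_one, transpose_single, add_mul, mul_add, one_mul, mul_one,
    single_mul_mul_single]
  abel

theorem Matrix.sum_add_sum_mul_single_add_sum_single_mul {R : Type*} [CommRing R]
    (M : ι → Matrix ι ι R) :
    ∑ i, M i + (∑ i, M i * single i i 1 + ∑ i, single i i 1 * M i)
      = ∑ i, (1 + single i i 1)ᵀ * M i * (1 + single i i 1) - diagonal fun i => M i i i := by
  simp only [transpose_one_add_single_mul_mul_one_add_single, Finset.sum_add_distrib,
    ← sum_single_eq_diagonal]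
  abel

theorem quotient_le_one_add_of_eq_sub_diagonal {G H K S : Matrix ι ι ℝ} {d b : ι → ℝ} {τ : ℝ}
    (hG : G.PosSemidef) (hK : K.PosSemidef) (hS : S.PosSemidef)
    (hGH : G + H = K - diagonal d) (hd0 : ∀ i, 0 ≤ d i) (hd1 : ∀ i, d i ≤ 1)
    (hb : b ≠ 0) (hτ : τ ≤ 1 / 2) (hdb : ∑ i, d i * b i ^ 2 ≤ τ * ∑ i, b i ^ 2) :
    b ⬝ᵥ ((1 + (2 : ℝ)⁻¹ • H) *ᵥ b) / (b ⬝ᵥ ((1 + G + H) *ᵥ b) + trace (S * (1 + G + H)))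
      ≤ 1 + τ := by
  have hX : 1 + G + H = 1 + K - diagonal d := by rw [add_assoc, hGH]; abel
  have hT : 0 ≤ trace (S * (1 + G + H)) := by
    refine hS.trace_mul_nonneg ?_
    rw [hX, add_sub_right_comm, ← diagonal_one, diagonal_sub]
    exact (PosSemidef.diagonal fun i => sub_nonneg.2 (hd1 i)).add hK
  generalize trace (S * (1 + G + H)) = T at hT ⊢
  have hH : H = K - diagonal d - G := by rw [← hGH]; abel
  have hbb : b ⬝ᵥ b = ∑ i, b i ^ 2 := by simp [dotProduct, sq]
  have hbd : b ⬝ᵥ (diagonal d *ᵥ b) = ∑ i, d i * b i ^ 2 := by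
    simp only [dotProduct, mulVec_diagonal]; exact Finset.sum_congr rfl fun i _ => by ring
  have hbG := hG.dotProduct_mulVec_nonneg b
  have hbK := hK.dotProduct_mulVec_nonneg b
  have hs0 : 0 ≤ ∑ i, d i * b i ^ 2 := Finset.sum_nonneg fun i _ => mul_nonneg (hd0 i) (sq_nonneg _)
  have hnb := sum_sq_pos_of_ne_zero hb
  rw [hX, hH]
  simp only [add_mulVec, sub_mulVec, smul_mulVec, one_mulVec, dotProduct_add, dotProduct_sub,
    dotProduct_smul, smul_eq_mul, star_trivial, hbb, hbd] at hbG hbK ⊢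
  have hτ0 : 0 ≤ τ := nonneg_of_mul_nonneg_left (hs0.trans hdb) hnb
  rw [div_le_iff₀ (by nlinarith)]
  nlinarith [mul_nonneg hτ0 hbK, mul_nonneg hτ0 hT, mul_nonneg (sub_nonneg.2 hτ) hs0]

theorem secondOrder_quotient_le_one_add {Q S : Matrix ι ι ℝ} {B : ι → Matrix ι ι ℝ} {γ τ : ℝ}
    {b : ι → ℝ} (hB : ∀ i, (B i).PosSemidef) (hS : S.PosSemidef) (hb : b ≠ 0) (hτ : τ ≤ 1 / 2)
    (hd : ∀ i, γ ^ 2 * (Qᵀ * B i * Q) i i ≤ 1)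
    (hdb : ∑ i, γ ^ 2 * (Qᵀ * B i * Q) i i * b i ^ 2 ≤ τ * ∑ i, b i ^ 2) :
    let G := γ ^ 2 • (Qᵀ * (∑ i, B i) * Q)
    let H := γ ^ 2 • (∑ i, Qᵀ * B i * Q * single i i 1)
      + γ ^ 2 • (∑ i, single i i 1 * Qᵀ * B i * Q)
    b ⬝ᵥ ((1 + (2 : ℝ)⁻¹ • H) *ᵥ b) / (b ⬝ᵥ ((1 + G + H) *ᵥ b) + trace (S * (1 + G + H)))
      ≤ 1 + τ := by
  intro G H
  have hM : ∀ i, (Qᵀ * B i * Q).PosSemidef := fun i => by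
    rw [← conjTranspose_eq_transpose_of_trivial]
    exact (hB i).conjTranspose_mul_mul_same Q
  have hG : G = γ ^ 2 • ∑ i, Qᵀ * B i * Q := by simp only [G, Matrix.mul_sum, Matrix.sum_mul]
  refine quotient_le_one_add_of_eq_sub_diagonal
    (K := γ ^ 2 • ∑ i, (1 + single i i 1)ᵀ * (Qᵀ * B i * Q) * (1 + single i i 1))
    (d := fun i => γ ^ 2 * (Qᵀ * B i * Q) i i) ?_ ?_ hS ?_
    (fun i => mul_nonneg (sq_nonneg γ) (hM i).diag_nonneg) hd hb hτ hdb
  · rw [hG]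
    exact (posSemidef_sum _ fun i _ => hM i).smul (sq_nonneg γ)
  · refine (posSemidef_sum _ fun i _ => ?_).smul (sq_nonneg γ)
    rw [← conjTranspose_eq_transpose_of_trivial]
    exact (hM i).conjTranspose_mul_mul_same _
  · have hE : ∀ i, single i i 1 * Qᵀ * B i * Q = single i i (1 : ℝ) * (Qᵀ * B i * Q) :=
      fun i => by simp only [Matrix.mul_assoc]
    rw [hG]
    simp only [H, hE, ← smul_add, sum_add_sum_mul_single_add_sum_single_mul, smul_sub]
    congr 1
    ext i j
    simp [diagonal_apply]

end SecondOrder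

theorem Matrix.sum_sum_sq_mul_apply_le_of_stochastic {ι κ : Type*} [Fintype ι] [Fintype κ]
    {P : Matrix ι ι ℝ} (hP0 : ∀ i j, 0 ≤ P i j) (hP1 : ∀ i, ∑ j, P i j = 1)
    {W : Matrix ι κ ℝ} {R : ℝ} (hW : ∀ c, ∑ i, W c i ^ 2 ≤ R) :
    ∑ j, ∑ i, (P * W) j i ^ 2 ≤ Fintype.card ι * R := by
  calc ∑ j, ∑ i, (P * W) j i ^ 2 ≤ ∑ j, ∑ i, ∑ c, P j c * W c i ^ 2 := by
        gcongr with j _ i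
        exact sq_sum_mul_le_sum_mul_sq (hP0 j) (hP1 j) _
    _ = ∑ j, ∑ c, P j c * ∑ i, W c i ^ 2 := by
        simp only [Finset.mul_sum]
        exact Finset.sum_congr rfl fun j _ => Finset.sum_comm
    _ ≤ ∑ j : ι, ∑ c, P j c * R := by
        gcongr with j _ c
        · exact hP0 j c
        · exact hW c
    _ = Fintype.card ι * R := by simp [← Finset.sum_mul, hP1]

section Resolvent

attribute [local instance] Matrix.linftyOpNormedRing Matrix.linftyOpNormedAlgebra

variable {ι : Type*} [Fintype ι] [DecidableEq ι] {P : Matrix ι ι ℝ} {γ : ℝ}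

theorem Matrix.sum_abs_le_linfty_opNorm (A : Matrix ι ι ℝ) (j : ι) : ∑ i, |A j i| ≤ ‖A‖ := by
  rw [linfty_opNorm_def]
  calc ∑ i, |A j i| = ((∑ i, ‖A j i‖₊ : NNReal) : ℝ) := by simp
    _ ≤ _ := NNReal.coe_le_coe.mpr
          (Finset.le_sup (f := fun j => ∑ i, ‖A j i‖₊) (Finset.mem_univ j))

theorem Matrix.linfty_opNorm_le_one_of_stochastic (hP0 : ∀ i j, 0 ≤ P i j)
    (hP1 : ∀ i, ∑ j, P i j = 1) : ‖P‖ ≤ 1 := by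
  rw [linfty_opNorm_def, NNReal.coe_le_one, Finset.sup_le_iff]
  intro i _
  rw [← NNReal.coe_le_one, NNReal.coe_sum]
  simp [Real.norm_of_nonneg (hP0 i _), hP1 i]

theorem Matrix.isUnit_one_sub_smul_of_stochastic (hP0 : ∀ i j, 0 ≤ P i j)
    (hP1 : ∀ i, ∑ j, P i j = 1) (hγ0 : 0 ≤ γ) (hγ1 : γ < 1) : IsUnit (1 - γ • P) := by
  refine isUnit_one_sub_of_norm_lt_one ?_
  rw [norm_smul, Real.norm_of_nonneg hγ0]
  nlinarith [linfty_opNorm_le_one_of_stochastic hP0 hP1, norm_nonneg P]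

theorem Matrix.inv_one_sub_smul_eq_one_add_smul_mul (h : IsUnit (1 - γ • P)) :
    (1 - γ • P)⁻¹ = 1 + γ • (P * (1 - γ • P)⁻¹) := by
  have := mul_nonsing_inv _ ((isUnit_iff_isUnit_det _).mp h)
  rw [sub_mul, one_mul, smul_mul] at this
  exact sub_eq_iff_eq_add.mp this

theorem Matrix.inv_one_sub_smul_eq_one_add_smul_inv_mul (h : IsUnit (1 - γ • P)) :
    (1 - γ • P)⁻¹ = 1 + γ • ((1 - γ • P)⁻¹ * P) := by
  have := nonsing_inv_mul _ ((isUnit_iff_isUnit_det _).mp h)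
  rw [mul_sub, mul_one, Matrix.mul_smul] at this
  exact sub_eq_iff_eq_add.mp this

theorem Matrix.linfty_opNorm_inv_one_sub_smul_le [Nonempty ι] (hP0 : ∀ i j, 0 ≤ P i j)
    (hP1 : ∀ i, ∑ j, P i j = 1) (hγ0 : 0 ≤ γ) (hγ1 : γ < 1) :
    ‖(1 - γ • P)⁻¹‖ ≤ (1 - γ)⁻¹ := by
  have hQ : ‖(1 - γ • P)⁻¹‖ ≤ 1 + γ * ‖(1 - γ • P)⁻¹‖ := by
    conv_lhs => rw [inv_one_sub_smul_eq_one_add_smul_mul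
      (isUnit_one_sub_smul_of_stochastic hP0 hP1 hγ0 hγ1)]
    calc _ ≤ ‖(1 : Matrix ι ι ℝ)‖ + γ * (‖P‖ * ‖(1 - γ • P)⁻¹‖) := by
          grw [norm_add_le, norm_smul, Real.norm_of_nonneg hγ0, norm_mul_le]
      _ ≤ _ := by
          grw [norm_one, linfty_opNorm_le_one_of_stochastic hP0 hP1, one_mul]
  rw [← one_div (1 - γ), le_div_iff₀ (by linarith)]
  linarith

theorem Matrix.sum_abs_inv_one_sub_smul_apply_le [Nonempty ι] (hP0 : ∀ i j, 0 ≤ P i j)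
    (hP1 : ∀ i, ∑ j, P i j = 1) (hγ0 : 0 ≤ γ) (hγ1 : γ < 1) (j : ι) :
    ∑ i, |(1 - γ • P)⁻¹ j i| ≤ (1 - γ)⁻¹ :=
  (sum_abs_le_linfty_opNorm _ j).trans (linfty_opNorm_inv_one_sub_smul_le hP0 hP1 hγ0 hγ1)

end Resolvent

section Stochastic

variable {ι : Type*} [Fintype ι] [DecidableEq ι] {P : Matrix ι ι ℝ} {γ : ℝ}

theorem Matrix.sum_mul_sq_inv_one_sub_smul_apply_le [Nonempty ι] (hP0 : ∀ i j, 0 ≤ P i j)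
    (hP1 : ∀ i, ∑ j, P i j = 1) (hγ0 : 0 ≤ γ) (hγ1 : γ < 1) {pM : ℝ} (hpM : ∀ i j, P i j ≤ pM)
    (hpM1 : pM ≤ 1) (k : ι) :
    ∑ j, P k j * (1 - γ • P)⁻¹ j k ^ 2 ≤ pM / (1 - γ) ^ 2 := by
  have hQ := inv_one_sub_smul_eq_one_add_smul_inv_mul
    (isUnit_one_sub_smul_of_stochastic hP0 hP1 hγ0 hγ1)
  set Q := (1 - γ • P)⁻¹
  set a := γ * (pM / (1 - γ))
  have hpM0 : 0 ≤ pM := (hP0 k k).trans (hpM k k)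
  have ha : 0 ≤ a := by positivity
  have hoff : ∀ j, |Q j k - (1 : Matrix ι ι ℝ) j k| ≤ a := fun j => by
    rw [hQ, add_apply, add_sub_cancel_left, smul_apply, smul_eq_mul, abs_mul, abs_of_nonneg hγ0,
      mul_apply]
    show γ * _ ≤ γ * (pM / (1 - γ))
    gcongr
    calc |∑ c, Q j c * P c k| ≤ ∑ c, |Q j c| * pM := by
          grw [Finset.abs_sum_le_sum_abs]
          gcongr with c
          rw [abs_mul, abs_of_nonneg (hP0 c k)]
          gcongr
          exact hpM c k
      _ ≤ pM / (1 - γ) := by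
          rw [← Finset.sum_mul, div_eq_inv_mul]
          gcongr
          exact sum_abs_inv_one_sub_smul_apply_le hP0 hP1 hγ0 hγ1 j
  have hsq : ∀ j, Q j k ^ 2 ≤ a ^ 2 + (1 : Matrix ι ι ℝ) j k * (1 + 2 * a) := fun j => by
    have := abs_le.mp (hoff j)
    rcases eq_or_ne j k with rfl | hjk
    · rw [one_apply_eq] at this ⊢; nlinarith
    · rw [one_apply_ne hjk] at this ⊢; nlinarith
  calc ∑ j, P k j * Q j k ^ 2
      ≤ ∑ j, P k j * (a ^ 2 + (1 : Matrix ι ι ℝ) j k * (1 + 2 * a)) := by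
        gcongr with j
        · exact hP0 k j
        · exact hsq j
    _ = a ^ 2 + P k k * (1 + 2 * a) := by
        simp [mul_add, Finset.sum_add_distrib, ← Finset.sum_mul, hP1 k, one_apply, ← mul_assoc]
    _ ≤ a ^ 2 + pM * (1 + 2 * a) := by grw [hpM k k]
    _ ≤ pM / (1 - γ) ^ 2 := by
        have h1 : 0 < 1 - γ := by linarith
        simp only [a]
        rw [← sub_nonneg]
        field_simp
        nlinarith [mul_nonneg (mul_nonneg hpM0 (sub_nonneg.mpr hpM1)) (mul_nonneg hγ0 h1.le)]

theorem Matrix.sum_sum_sq_inv_one_sub_smul_mul_le [Nonempty ι] (hP0 : ∀ i j, 0 ≤ P i j)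
    (hP1 : ∀ i, ∑ j, P i j = 1) (hγ0 : 0 ≤ γ) (hγ1 : γ < 1) {b : ι → ℝ} {bM : ℝ}
    (hbM : ∀ i, |b i| ≤ bM) :
    ∑ j, ∑ i, ((1 - γ • P)⁻¹ j i * b i) ^ 2
      ≤ (√(∑ i, b i ^ 2) + γ * √(Fintype.card ι) * bM / (1 - γ)) ^ 2 := by
  have hQ := inv_one_sub_smul_eq_one_add_smul_mul
    (isUnit_one_sub_smul_of_stochastic hP0 hP1 hγ0 hγ1)
  set Q := (1 - γ • P)⁻¹
  have hbM0 : 0 ≤ bM := (abs_nonneg _).trans (hbM (Classical.arbitrary ι))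
  have hW : Q * diagonal b = diagonal b + γ • (P * (Q * diagonal b)) := by
    conv_lhs => rw [hQ]
    rw [add_mul, one_mul, smul_mul, Matrix.mul_assoc]
  have hrow : ∀ c, ∑ i, (Q * diagonal b) c i ^ 2 ≤ (bM / (1 - γ)) ^ 2 := fun c => by
    calc ∑ i, (Q * diagonal b) c i ^ 2 ≤ (∑ i, |Q c i| * bM) ^ 2 := by
          refine (Finset.sum_le_sum fun i _ => ?_).trans
            (Finset.sum_sq_le_sq_sum_of_nonneg fun i _ => by positivity)
          rw [mul_diagonal, ← sq_abs, abs_mul]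
          gcongr
          exact hbM i
      _ ≤ ((1 - γ)⁻¹ * bM) ^ 2 := by
          rw [← Finset.sum_mul]
          gcongr
          exact sum_abs_inv_one_sub_smul_apply_le hP0 hP1 hγ0 hγ1 c
      _ = (bM / (1 - γ)) ^ 2 := by ring
  have hPW := sum_sum_sq_mul_apply_le_of_stochastic hP0 hP1 hrow
  have hdiag : ∑ j, ∑ i, diagonal b j i ^ 2 = ∑ i, b i ^ 2 := by
    simp [diagonal_apply, sq]
  have hγPW : √(∑ j, ∑ i, (γ * (P * (Q * diagonal b)) j i) ^ 2)
      ≤ γ * √(Fintype.card ι) * bM / (1 - γ) := by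
    rw [Real.sqrt_le_iff]
    refine ⟨by have := hγ1; positivity, ?_⟩
    simp only [mul_pow, ← Finset.mul_sum]
    rw [div_pow, mul_pow, mul_pow, Real.sq_sqrt (Nat.cast_nonneg _)]
    calc γ ^ 2 * ∑ j, ∑ i, (P * (Q * diagonal b)) j i ^ 2
        ≤ γ ^ 2 * (Fintype.card ι * (bM / (1 - γ)) ^ 2) := by gcongr
      _ = _ := by rw [div_pow]; ring
  calc ∑ j, ∑ i, (Q j i * b i) ^ 2
      = ∑ j, ∑ i, (diagonal b + γ • (P * (Q * diagonal b))) j i ^ 2 := by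
        simp only [← hW, mul_diagonal]
    _ ≤ _ := sum_sum_add_sq_le _ _
    _ ≤ _ := by
        simp only [hdiag, smul_apply, smul_eq_mul]
        gcongr

theorem Matrix.sq_mul_inv_conj_empiricalCov_apply_self_le [Nonempty ι] (hP0 : ∀ i j, 0 ≤ P i j)
    (hP1 : ∀ i, ∑ j, P i j = 1) (hγ0 : 0 ≤ γ) (hγ1 : γ < 1) {pM bM : ℝ}
    (hpM : ∀ i j, P i j ≤ pM) (hpM1 : pM ≤ 1) {b : ι → ℝ} (hb : b ≠ 0) (hbM : ∀ i, |b i| ≤ bM)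
    (n : ℕ) (k : ι) :
    γ ^ 2 * (((1 - γ • P)⁻¹)ᵀ * empiricalCov n (P k) * (1 - γ • P)⁻¹ : Matrix ι ι ℝ) k k
      ≤ pM / n * (γ ^ 2 / (1 - γ) ^ 2)
        * ((1 - γ) + γ * √(Fintype.card ι) * bM / √(∑ i, b i ^ 2)) ^ 2 := by
  have hpM0 : 0 ≤ pM := (hP0 k k).trans (hpM k k)
  have hnb : 0 < √(∑ i, b i ^ 2) := Real.sqrt_pos.mpr (sum_sq_pos_of_ne_zero hb)
  have hK : 1 ≤ (1 - γ) + γ * √(Fintype.card ι) * bM / √(∑ i, b i ^ 2) := by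
    have := (one_le_div hnb).mpr (Real.sqrt_sum_sq_le_sqrt_card_mul hbM)
    rw [mul_assoc, mul_div_assoc]
    nlinarith
  calc γ ^ 2 * (((1 - γ • P)⁻¹)ᵀ * empiricalCov n (P k) * (1 - γ • P)⁻¹ : Matrix ι ι ℝ) k k
      ≤ γ ^ 2 * ((n : ℝ)⁻¹ * (pM / (1 - γ) ^ 2)) := by
        gcongr
        refine (transpose_mul_empiricalCov_mul_apply_self_le _ _ _ k).trans ?_
        gcongr
        exact sum_mul_sq_inv_one_sub_smul_apply_le hP0 hP1 hγ0 hγ1 hpM hpM1 k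
    _ = pM / n * (γ ^ 2 / (1 - γ) ^ 2) * 1 := by ring
    _ ≤ _ := by gcongr; exact one_le_pow₀ hK

theorem Matrix.sum_sq_mul_inv_conj_empiricalCov_apply_self_mul_sq_le [Nonempty ι]
    (hP0 : ∀ i j, 0 ≤ P i j) (hP1 : ∀ i, ∑ j, P i j = 1) (hγ0 : 0 ≤ γ) (hγ1 : γ < 1) {pM bM : ℝ}
    (hpM : ∀ i j, P i j ≤ pM) {b : ι → ℝ} (hb : b ≠ 0) (hbM : ∀ i, |b i| ≤ bM) (n : ℕ) :
    ∑ i, γ ^ 2 * (((1 - γ • P)⁻¹)ᵀ * empiricalCov n (P i) * (1 - γ • P)⁻¹ : Matrix ι ι ℝ) i i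
        * b i ^ 2
      ≤ pM / n * (γ ^ 2 / (1 - γ) ^ 2)
        * ((1 - γ) + γ * √(Fintype.card ι) * bM / √(∑ i, b i ^ 2)) ^ 2 * ∑ i, b i ^ 2 := by
  have hpM0 : 0 ≤ pM := (hP0 _ _).trans (hpM (Classical.arbitrary ι) (Classical.arbitrary ι))
  calc ∑ i, γ ^ 2 * (((1 - γ • P)⁻¹)ᵀ * empiricalCov n (P i) * (1 - γ • P)⁻¹ : Matrix ι ι ℝ) i i
        * b i ^ 2
      ≤ ∑ i, γ ^ 2 * ((n : ℝ)⁻¹ * ∑ j, P i j * (1 - γ • P)⁻¹ j i ^ 2) * b i ^ 2 := by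
        gcongr with i
        exact transpose_mul_empiricalCov_mul_apply_self_le _ _ _ i
    _ = γ ^ 2 * (n : ℝ)⁻¹ * ∑ i, ∑ j, P i j * ((1 - γ • P)⁻¹ j i * b i) ^ 2 := by
        simp only [Finset.mul_sum, Finset.sum_mul]
        exact Finset.sum_congr rfl fun i _ => Finset.sum_congr rfl fun j _ => by ring
    _ ≤ γ ^ 2 * (n : ℝ)⁻¹ * (pM * ∑ j, ∑ i, ((1 - γ • P)⁻¹ j i * b i) ^ 2) := by
        rw [Finset.sum_comm]
        simp only [Finset.mul_sum]
        gcongr with j _ i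
        exact hpM i j
    _ ≤ γ ^ 2 * (n : ℝ)⁻¹ * (pM * (√(∑ i, b i ^ 2)
          + γ * √(Fintype.card ι) * bM / (1 - γ)) ^ 2) := by
        gcongr
        exact sum_sum_sq_inv_one_sub_smul_mul_le hP0 hP1 hγ0 hγ1 hbM
    _ = _ := by
        have hs := Real.sq_sqrt (sum_sq_pos_of_ne_zero hb).le
        have hs0 := Real.sqrt_pos.mpr (sum_sq_pos_of_ne_zero hb)
        set s := √(∑ i, b i ^ 2)
        have : (1 - γ) ≠ 0 := by linarith
        rw [← hs]
        field_simp

end Stochastic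

theorem stmt12_general {N : ℕ} [NeZero N]
    (P : Matrix (Fin N) (Fin N) ℝ) (hP0 : ∀ i j, 0 ≤ P i j) (hP1 : ∀ i, ∑ j, P i j = 1)
    (γ : ℝ) (hγ : γ ∈ Set.Ioo (0 : ℝ) 1)
    (n : ℕ)
    (b : Fin N → ℝ) (hb : b ≠ 0)
    (S : Matrix (Fin N) (Fin N) ℝ) (hS : S.PosSemidef) :
    letI A : Matrix (Fin N) (Fin N) ℝ := 1 - γ • P
    letI B : Fin N → Matrix (Fin N) (Fin N) ℝ :=
      fun i => (n : ℝ)⁻¹ • (Matrix.diagonal (P i) - Matrix.vecMulVec (P i) (P i))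
    letI G : Matrix (Fin N) (Fin N) ℝ := γ ^ 2 • ((A⁻¹)ᵀ * (∑ i, B i) * A⁻¹)
    letI H : Matrix (Fin N) (Fin N) ℝ :=
      γ ^ 2 • (∑ i, (A⁻¹)ᵀ * B i * A⁻¹ * Matrix.single i i (1 : ℝ))
        + γ ^ 2 • (∑ i, Matrix.single i i (1 : ℝ) * (A⁻¹)ᵀ * B i * A⁻¹)
    letI pM : ℝ := Finset.univ.sup' Finset.univ_nonempty (fun i =>
      Finset.univ.sup' Finset.univ_nonempty (fun j => P i j))
    letI bM : ℝ := Finset.univ.sup' Finset.univ_nonempty (fun i => |b i|)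
    letI τ : ℝ := pM / n * (γ ^ 2 / (1 - γ) ^ 2) *
      ((1 - γ) + γ * Real.sqrt N * bM / Real.sqrt (∑ i, b i ^ 2)) ^ 2
    τ ≤ 1 / 2 →
      (b ⬝ᵥ ((1 + (2 : ℝ)⁻¹ • H) *ᵥ b))
          / (b ⬝ᵥ ((1 + G + H) *ᵥ b) + Matrix.trace (S * (1 + G + H)))
        ≤ 1 + τ := by
  obtain ⟨hγ0, hγ1⟩ := hγ
  intro hτ
  set pM := Finset.univ.sup' Finset.univ_nonempty fun i =>
    Finset.univ.sup' Finset.univ_nonempty fun j => P i j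
  set bM := Finset.univ.sup' Finset.univ_nonempty fun i => |b i|
  have hpM : ∀ i j, P i j ≤ pM := fun i j =>
    (Finset.le_sup' (fun j => P i j) (Finset.mem_univ j)).trans
      (Finset.le_sup' (fun i => Finset.univ.sup' _ fun j => P i j) (Finset.mem_univ i))
  have hpM1 : pM ≤ 1 := Finset.sup'_le _ _ fun i _ => Finset.sup'_le _ _ fun j _ =>
    (Finset.single_le_sum (fun k _ => hP0 i k) (Finset.mem_univ j)).trans_eq (hP1 i)
  have hbM : ∀ i, |b i| ≤ bM := fun i => Finset.le_sup' (fun i => |b i|) (Finset.mem_univ i)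
  have hd := sq_mul_inv_conj_empiricalCov_apply_self_le hP0 hP1 hγ0.le hγ1 hpM hpM1 hb hbM n
  have hdb := sum_sq_mul_inv_conj_empiricalCov_apply_self_mul_sq_le hP0 hP1 hγ0.le hγ1 hpM hb hbM n
  rw [Fintype.card_fin] at hd hdb
  exact secondOrder_quotient_le_one_add (fun i => posSemidef_empiricalCov n (hP0 i) (hP1 i)) hS hb
    hτ (fun k => (hd k).trans (by linarith)) hdb

/-- In the setting of Statement 10 (residual norm `M = I`), with
`p_M = max_{i,j} P_{ij}`, `b_M = max_i |b_i|`, and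
`τ = (p_M/n)·(γ²/(1−γ)²)·((1−γ) + γ√N·b_M/‖b‖₂)²`: if `τ ≤ 1/2`, then `θ(b,P) ≤ 1 + τ`. -/
theorem stmt12 {N : ℕ} [NeZero N]
    (P : Matrix (Fin N) (Fin N) ℝ) (hP0 : ∀ i j, 0 ≤ P i j) (hP1 : ∀ i, ∑ j, P i j = 1)
    (γ : ℝ) (hγ : γ ∈ Set.Ioo (0 : ℝ) 1)
    (n : ℕ) (hn : 0 < n)
    (b : Fin N → ℝ) (hb : b ≠ 0)
    (S : Matrix (Fin N) (Fin N) ℝ) (hS : S.PosSemidef) :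
    letI A : Matrix (Fin N) (Fin N) ℝ := 1 - γ • P
    letI B : Fin N → Matrix (Fin N) (Fin N) ℝ :=
      fun i => (n : ℝ)⁻¹ • (Matrix.diagonal (P i) - Matrix.vecMulVec (P i) (P i))
    letI G : Matrix (Fin N) (Fin N) ℝ := γ ^ 2 • ((A⁻¹)ᵀ * (∑ i, B i) * A⁻¹)
    letI H : Matrix (Fin N) (Fin N) ℝ :=
      γ ^ 2 • (∑ i, (A⁻¹)ᵀ * B i * A⁻¹ * Matrix.single i i (1 : ℝ))
        + γ ^ 2 • (∑ i, Matrix.single i i (1 : ℝ) * (A⁻¹)ᵀ * B i * A⁻¹)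
    letI pM : ℝ := Finset.univ.sup' Finset.univ_nonempty (fun i =>
      Finset.univ.sup' Finset.univ_nonempty (fun j => P i j))
    letI bM : ℝ := Finset.univ.sup' Finset.univ_nonempty (fun i => |b i|)
    letI τ : ℝ := pM / n * (γ ^ 2 / (1 - γ) ^ 2) *
      ((1 - γ) + γ * Real.sqrt N * bM / Real.sqrt (∑ i, b i ^ 2)) ^ 2
    τ ≤ 1 / 2 →
      (b ⬝ᵥ ((1 + (2 : ℝ)⁻¹ • H) *ᵥ b))
          / (b ⬝ᵥ ((1 + G + H) *ᵥ b) + Matrix.trace (S * (1 + G + H)))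
        ≤ 1 + τ :=
  stmt12_general P hP0 hP1 γ hγ n b hb S hS
end

section
/- Let P ∈ ℝ^{N×N} be row-stochastic, γ ∈ (0,1), b ∈ ℝ^N, b_M = max_i |b_i|, and define k ∈ ℝ^N by k_i = (1/(1 − γ))·((1 − γ)|b_i| + γ b_M). Then ‖(I − γP)^{-1} b‖₂ ≤ ‖k‖₂, and moreover ‖k‖₂² = (1/(1 − γ)²)·((1 − γ)²‖b‖₂² + N γ² b_M² + 2γ(1 − γ) b_M ‖b‖₁). -/
/-!
A row-stochastic `P` does not increase the sup norm, so a solution of `x = b + γ P x` satisfies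
`|x i| ≤ |b i| + γ ‖x‖∞`; taking the maximum over `i` gives `‖x‖∞ ≤ ‖b‖∞ / (1 - γ)`, and
substituting back gives `|x i| ≤ k i`. For `b = 0` the same bound shows that `1 - γ P` has
trivial kernel, hence is invertible. The formula for `‖k‖₂²` is the expansion of a square.
-/

open Matrix

theorem sup'_univ_abs_eq_norm {ι : Type*} [Fintype ι] [Nonempty ι] (b : ι → ℝ) :
    Finset.univ.sup' Finset.univ_nonempty (fun i => |b i|) = ‖b‖ := by
  refine le_antisymm (Finset.sup'_le _ _ fun i _ => norm_le_pi_norm b i) ?_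
  have hle : ∀ i, |b i| ≤ Finset.univ.sup' Finset.univ_nonempty (fun i => |b i|) :=
    fun i => Finset.le_sup' (fun i => |b i|) (Finset.mem_univ i)
  exact (pi_norm_le_iff_of_nonneg ((abs_nonneg _).trans (hle (Classical.arbitrary ι)))).2 hle

theorem sum_sq_mul_abs_add {ι : Type*} [Fintype ι] (a c : ℝ) (b : ι → ℝ) :
    ∑ i, (a * |b i| + c) ^ 2
      = a ^ 2 * ∑ i, b i ^ 2 + Fintype.card ι * c ^ 2 + 2 * a * c * ∑ i, |b i| := by
  simp only [add_sq, mul_pow, sq_abs, Finset.sum_add_distrib, ← Finset.mul_sum,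
    ← Finset.sum_mul, Finset.sum_const, Finset.card_univ, nsmul_eq_mul]
  ring

namespace Matrix

variable {n : Type*} [Fintype n] [DecidableEq n] {P : Matrix n n ℝ}

theorem norm_mulVec_le_of_mem_rowStochastic (hP : P ∈ rowStochastic ℝ n) (v : n → ℝ) :
    ‖P *ᵥ v‖ ≤ ‖v‖ := by
  refine (pi_norm_le_iff_of_nonneg (norm_nonneg v)).2 fun i => ?_
  calc ‖(P *ᵥ v) i‖ = ‖∑ j, P i j * v j‖ := rfl
    _ ≤ ∑ j, ‖P i j * v j‖ := norm_sum_le _ _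
    _ ≤ ∑ j, P i j * ‖v‖ := Finset.sum_le_sum fun j _ => by
        rw [norm_mul, Real.norm_of_nonneg (nonneg_of_mem_rowStochastic hP)]
        exact mul_le_mul_of_nonneg_left (norm_le_pi_norm v j) (nonneg_of_mem_rowStochastic hP)
    _ = ‖v‖ := by rw [← Finset.sum_mul, sum_row_of_mem_rowStochastic hP, one_mul]

section FixedPoint

variable {γ : ℝ} {x b : n → ℝ}

theorem abs_le_of_eq_add_smul_mulVec (hP : P ∈ rowStochastic ℝ n) (hγ : 0 ≤ γ)
    (hx : x = b + γ • (P *ᵥ x)) (i : n) : |x i| ≤ |b i| + γ * ‖x‖ :=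
  calc |x i| = |b i + γ * (P *ᵥ x) i| := congrArg (fun v : n → ℝ => |v i|) hx
    _ ≤ |b i| + |γ * (P *ᵥ x) i| := abs_add_le _ _
    _ = |b i| + γ * ‖(P *ᵥ x) i‖ := by rw [abs_mul, abs_of_nonneg hγ, Real.norm_eq_abs]
    _ ≤ |b i| + γ * ‖x‖ := by
        gcongr
        exact (norm_le_pi_norm _ i).trans (norm_mulVec_le_of_mem_rowStochastic hP x)

theorem one_sub_mul_norm_le_of_eq_add_smul_mulVec (hP : P ∈ rowStochastic ℝ n) (hγ : 0 ≤ γ)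
    (hx : x = b + γ • (P *ᵥ x)) : (1 - γ) * ‖x‖ ≤ ‖b‖ := by
  have hnorm : ‖x‖ ≤ ‖b‖ + γ * ‖x‖ :=
    (pi_norm_le_iff_of_nonneg (by positivity)).2 fun i =>
      (abs_le_of_eq_add_smul_mulVec hP hγ hx i).trans
        (add_le_add_left (norm_le_pi_norm b i) _)
  linarith

theorem abs_le_add_div_of_eq_add_smul_mulVec (hP : P ∈ rowStochastic ℝ n) (hγ0 : 0 ≤ γ)
    (hγ1 : γ < 1) (hx : x = b + γ • (P *ᵥ x)) (i : n) :
    |x i| ≤ |b i| + γ / (1 - γ) * ‖b‖ := by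
  have hnorm : ‖x‖ ≤ ‖b‖ / (1 - γ) := by
    rw [le_div_iff₀ (sub_pos.2 hγ1), mul_comm]
    exact one_sub_mul_norm_le_of_eq_add_smul_mulVec hP hγ0 hx
  calc |x i| ≤ |b i| + γ * ‖x‖ := abs_le_of_eq_add_smul_mulVec hP hγ0 hx i
    _ ≤ |b i| + γ * (‖b‖ / (1 - γ)) := by gcongr
    _ = |b i| + γ / (1 - γ) * ‖b‖ := by ring

theorem isUnit_det_one_sub_smul_of_mem_rowStochastic (hP : P ∈ rowStochastic ℝ n)
    (hγ0 : 0 ≤ γ) (hγ1 : γ < 1) : IsUnit (1 - γ • P).det := by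
  refine isUnit_iff_ne_zero.2 fun hdet => ?_
  obtain ⟨v, hv0, hv⟩ := exists_mulVec_eq_zero_iff.2 hdet
  have hfix : v = 0 + γ • (P *ᵥ v) := by
    rw [sub_mulVec, one_mulVec, smul_mulVec, sub_eq_zero] at hv
    rw [zero_add, ← hv]
  have hle := one_sub_mul_norm_le_of_eq_add_smul_mulVec hP hγ0 hfix
  rw [norm_zero] at hle
  exact hv0 (norm_le_zero_iff.1 (nonpos_of_mul_nonpos_right hle (sub_pos.2 hγ1)))

theorem inv_one_sub_smul_mulVec_eq (hdet : IsUnit (1 - γ • P).det) (b : n → ℝ) :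
    (1 - γ • P)⁻¹ *ᵥ b = b + γ • (P *ᵥ ((1 - γ • P)⁻¹ *ᵥ b)) := by
  have h : (1 - γ • P) *ᵥ ((1 - γ • P)⁻¹ *ᵥ b) = b := by
    rw [mulVec_mulVec, mul_nonsing_inv _ hdet, one_mulVec]
  rw [sub_mulVec, one_mulVec, smul_mulVec] at h
  exact eq_add_of_sub_eq h

end FixedPoint

end Matrix

/-- Let `P` be row-stochastic, `γ ∈ (0,1)`, `b ∈ ℝ^N`, `b_M = max_i |b_i|`,
and `k_i = (1/(1−γ))·((1−γ)|b_i| + γ b_M)`. Then `‖(I − γP)⁻¹ b‖₂ ≤ ‖k‖₂` and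
`‖k‖₂² = (1/(1−γ)²)·((1−γ)²‖b‖₂² + Nγ²b_M² + 2γ(1−γ)b_M‖b‖₁)`. -/
theorem stmt15 {N : ℕ} [NeZero N]
    (P : Matrix (Fin N) (Fin N) ℝ) (hP0 : ∀ i j, 0 ≤ P i j) (hP1 : ∀ i, ∑ j, P i j = 1)
    (γ : ℝ) (hγ : γ ∈ Set.Ioo (0 : ℝ) 1)
    (b : Fin N → ℝ) :
    letI bM : ℝ := Finset.univ.sup' Finset.univ_nonempty (fun i => |b i|)
    letI k : Fin N → ℝ := fun i => (1 / (1 - γ)) * ((1 - γ) * |b i| + γ * bM)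
    Real.sqrt (∑ i, ((1 - γ • P)⁻¹ *ᵥ b) i ^ 2) ≤ Real.sqrt (∑ i, k i ^ 2)
    ∧ ∑ i, k i ^ 2
        = (1 / (1 - γ) ^ 2) *
            ((1 - γ) ^ 2 * (∑ i, b i ^ 2) + N * γ ^ 2 * bM ^ 2
              + 2 * γ * (1 - γ) * bM * ∑ i, |b i|) := by
  beta_reduce
  rw [sup'_univ_abs_eq_norm]
  obtain ⟨hγ0, hγ1⟩ := hγ
  have hP : P ∈ rowStochastic ℝ (Fin N) := mem_rowStochastic_iff_sum.2 ⟨hP0, hP1⟩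
  have hk (i : Fin N) :
      1 / (1 - γ) * ((1 - γ) * |b i| + γ * ‖b‖) = |b i| + γ / (1 - γ) * ‖b‖ := by
    field_simp [(sub_pos.2 hγ1).ne']
  have hx := inv_one_sub_smul_mulVec_eq
    (isUnit_det_one_sub_smul_of_mem_rowStochastic hP hγ0.le hγ1) b
  refine ⟨Real.sqrt_le_sqrt (Finset.sum_le_sum fun i _ => sq_le_sq.2 ?_), ?_⟩
  · rw [hk]
    exact (abs_le_add_div_of_eq_add_smul_mulVec hP hγ0.le hγ1 hx i).trans (le_abs_self _)
  · simp only [mul_pow, _root_.one_div_pow, ← Finset.mul_sum, sum_sq_mul_abs_add,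
      Fintype.card_fin]
    ring
end

section
/- Let P ∈ ℝ^{N×N} be row-stochastic, γ ∈ (0,1), b ∈ ℝ^N, b_M = max_i |b_i|, and define k ∈ ℝ^N by k_i = (1/(1 − γ))·((1 − γ)|b_i| + γ b_M). Then Σ_{i=1}^{N} ‖(I − γP)^{-1} diag(e_i) b‖₂² ≤ ‖k‖₂² and Σ_{i=1}^{N} ‖(I − γP)^{-1} diag(e_i) b‖₂ ≤ √N·‖k‖₂. -/
open Matrix BigOperators

/-!
With `M = (1 - γP)⁻¹`, the `j`-th entry of the `i`-th vector is `M j i * b i`, so both bounds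
follow from `f j ≤ k j = |b j| + γ b_M / (1 - γ)` for `f := |M| |b|` (entrywise absolute values).
Since `M = 1 + γPM`, we get `f ≤ |b| + γPf` entrywise; at a maximiser of `f` the average `Pf` is
at most `max f`, which gives `max f ≤ b_M / (1 - γ)` and then the bound on every `f j`. The same
maximum principle, applied to `|v|` for `v` in the kernel of `1 - γP`, shows that `1 - γP` is
invertible. The second inequality is then Cauchy–Schwarz.
-/

namespace Matrix

variable {n : Type*} [Fintype n]

theorem sum_sq_mul_le_sq_map_abs_mulVec_abs (M : Matrix n n ℝ) (b : n → ℝ) (j : n) :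
    ∑ i, (M j i * b i) ^ 2 ≤ (M.map abs *ᵥ fun i => |b i|) j ^ 2 :=
  calc ∑ i, (M j i * b i) ^ 2 = ∑ i, (|M j i| * |b i|) ^ 2 := by simp_rw [← abs_mul, sq_abs]
    _ ≤ (∑ i, |M j i| * |b i|) ^ 2 := Finset.sum_sq_le_sq_sum_of_nonneg fun i _ => by positivity

theorem abs_mulVec_le_mulVec_abs {P : Matrix n n ℝ} (hP : ∀ i j, 0 ≤ P i j) (v : n → ℝ) (j : n) :
    |(P *ᵥ v) j| ≤ (P *ᵥ fun l => |v l|) j :=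
  (Finset.abs_sum_le_sum_abs _ _).trans_eq <| Finset.sum_congr rfl fun l _ => by
    rw [abs_mul, abs_of_nonneg (hP j l)]

theorem mulVec_single_mulVec {R : Type*} [NonAssocSemiring R] [DecidableEq n]
    (M : Matrix n n R) (b : n → R) (i j : n) :
    (M *ᵥ (single i i (1 : R) *ᵥ b)) j = M j i * b i := by
  rw [single_mulVec, one_mul]
  exact dotProduct_single (M j) (b i) i

variable [DecidableEq n] {P : Matrix n n ℝ} {γ : ℝ}

theorem mulVec_le_of_mem_rowStochastic (hP : P ∈ rowStochastic ℝ n) {f : n → ℝ} {S : ℝ}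
    (hf : ∀ l, f l ≤ S) (j : n) : (P *ᵥ f) j ≤ S :=
  calc (P *ᵥ f) j = ∑ l, P j l * f l := rfl
    _ ≤ ∑ l, P j l * S :=
      Finset.sum_le_sum fun l _ => mul_le_mul_of_nonneg_left (hf l) (nonneg_of_mem_rowStochastic hP)
    _ = S := by rw [← Finset.sum_mul, sum_row_of_mem_rowStochastic hP, one_mul]

theorem le_add_of_le_add_smul_mulVec (hP : P ∈ rowStochastic ℝ n) (hγ0 : 0 ≤ γ) (hγ1 : γ < 1)
    {f c : n → ℝ} {B : ℝ} (hcB : ∀ i, c i ≤ B) (hf : ∀ i, f i ≤ c i + γ * (P *ᵥ f) i) (j : n) :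
    f j ≤ c j + γ * B / (1 - γ) := by
  obtain ⟨m, -, hm⟩ := Finset.exists_max_image Finset.univ f ⟨j, Finset.mem_univ j⟩
  have hPf : ∀ i, γ * (P *ᵥ f) i ≤ γ * f m := fun i =>
    mul_le_mul_of_nonneg_left (mulVec_le_of_mem_rowStochastic hP (hm · (Finset.mem_univ _)) i) hγ0
  have hfm : f m ≤ B / (1 - γ) := by
    rw [le_div_iff₀ (by linarith)]
    linarith [hf m, hcB m, hPf m]
  calc f j ≤ c j + γ * f m := (hf j).trans (by linarith [hPf j])
    _ ≤ c j + γ * (B / (1 - γ)) := by gcongr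
    _ = c j + γ * B / (1 - γ) := by ring

theorem det_one_sub_smul_ne_zero (hP : P ∈ rowStochastic ℝ n) (hγ0 : 0 ≤ γ) (hγ1 : γ < 1) :
    (1 - γ • P).det ≠ 0 := by
  intro hdet
  obtain ⟨v, hv0, hv⟩ := exists_mulVec_eq_zero_iff.mpr hdet
  rw [sub_mulVec, one_mulVec, sub_eq_zero, smul_mulVec] at hv
  have hfix : ∀ i, |v i| ≤ 0 + γ * (P *ᵥ fun l => |v l|) i := fun i => by
    conv_lhs => rw [hv, Pi.smul_apply, smul_eq_mul, abs_mul, abs_of_nonneg hγ0]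
    rw [zero_add]
    exact mul_le_mul_of_nonneg_left
      (abs_mulVec_le_mulVec_abs (fun _ _ => nonneg_of_mem_rowStochastic hP) v i) hγ0
  refine hv0 (funext fun j => abs_nonpos_iff.mp ?_)
  simpa using le_add_of_le_add_smul_mulVec hP hγ0 hγ1 (fun _ => le_rfl) hfix j

theorem map_abs_mulVec_le_add_smul_mulVec (hP : ∀ i j, 0 ≤ P i j) (hγ0 : 0 ≤ γ)
    {M : Matrix n n ℝ} (hM : (1 - γ • P) * M = 1) {c : n → ℝ} (hc : ∀ i, 0 ≤ c i) (j : n) :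
    (M.map abs *ᵥ c) j ≤ c j + γ * (P *ᵥ (M.map abs *ᵥ c)) j := by
  have hMfix : M = 1 + γ • (P * M) := by
    rw [sub_mul, one_mul, smul_mul_assoc] at hM
    exact sub_eq_iff_eq_add.mp hM
  have hentry : ∀ i, |M j i| ≤ (1 + γ • (P * M.map abs)) j i := fun i => by
    have hji := congrFun (congrFun hMfix j) i
    simp only [add_apply, smul_apply, smul_eq_mul] at hji ⊢
    rw [hji]
    refine (abs_add_le _ _).trans (add_le_add ?_ ?_)
    · rw [one_apply]; split_ifs <;> simp
    · rw [abs_mul, abs_of_nonneg hγ0]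
      exact mul_le_mul_of_nonneg_left (abs_mulVec_le_mulVec_abs hP (fun l => M l i) j) hγ0
  calc (M.map abs *ᵥ c) j = ∑ i, |M j i| * c i := rfl
    _ ≤ ∑ i, (1 + γ • (P * M.map abs)) j i * c i :=
      Finset.sum_le_sum fun i _ => mul_le_mul_of_nonneg_right (hentry i) (hc i)
    _ = c j + γ * (P *ᵥ (M.map abs *ᵥ c)) j := by
      change ((1 + γ • (P * M.map abs)) *ᵥ c) j = _
      rw [add_mulVec, one_mulVec, smul_mulVec, mulVec_mulVec]
      rfl

theorem map_abs_inv_one_sub_smul_mulVec_le (hP : P ∈ rowStochastic ℝ n) (hγ0 : 0 ≤ γ)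
    (hγ1 : γ < 1) {c : n → ℝ} {B : ℝ} (hc0 : ∀ i, 0 ≤ c i) (hcB : ∀ i, c i ≤ B) (j : n) :
    ((1 - γ • P)⁻¹.map abs *ᵥ c) j ≤ c j + γ * B / (1 - γ) :=
  le_add_of_le_add_smul_mulVec hP hγ0 hγ1 hcB
    (map_abs_mulVec_le_add_smul_mulVec (fun _ _ => nonneg_of_mem_rowStochastic hP) hγ0
      (mul_nonsing_inv _ (det_one_sub_smul_ne_zero hP hγ0 hγ1).isUnit) hc0) j

end Matrix

theorem Real.sum_sqrt_le_sqrt_card_mul_sqrt_sum {ι : Type*} [Fintype ι] {s : ι → ℝ}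
    (hs : ∀ i, 0 ≤ s i) : ∑ i, √(s i) ≤ √(Fintype.card ι) * √(∑ i, s i) := by
  simpa using Real.sum_sqrt_mul_sqrt_le Finset.univ (fun _ => zero_le_one) hs

/-- Let `P` be row-stochastic, `γ ∈ (0,1)`, `b ∈ ℝ^N`, `b_M = max_i |b_i|`,
and `k_i = (1/(1−γ))·((1−γ)|b_i| + γ b_M)`. Then
`Σ_i ‖(I − γP)⁻¹ diag(e_i) b‖₂² ≤ ‖k‖₂²` and `Σ_i ‖(I − γP)⁻¹ diag(e_i) b‖₂ ≤ √N·‖k‖₂`. -/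
theorem stmt16 {N : ℕ} [NeZero N]
    (P : Matrix (Fin N) (Fin N) ℝ) (hP0 : ∀ i j, 0 ≤ P i j) (hP1 : ∀ i, ∑ j, P i j = 1)
    (γ : ℝ) (hγ : γ ∈ Set.Ioo (0 : ℝ) 1)
    (b : Fin N → ℝ) :
    letI bM : ℝ := Finset.univ.sup' Finset.univ_nonempty (fun i => |b i|)
    letI k : Fin N → ℝ := fun i => (1 / (1 - γ)) * ((1 - γ) * |b i| + γ * bM)
    letI a : Fin N → Fin N → ℝ :=
      fun i => (1 - γ • P)⁻¹ *ᵥ (Matrix.single i i (1 : ℝ) *ᵥ b)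
    (∑ i, ∑ j, a i j ^ 2 ≤ ∑ i, k i ^ 2)
    ∧ ∑ i, Real.sqrt (∑ j, a i j ^ 2) ≤ Real.sqrt N * Real.sqrt (∑ i, k i ^ 2) := by
  obtain ⟨hγ0, hγ1⟩ := hγ
  have hP : P ∈ rowStochastic ℝ (Fin N) := mem_rowStochastic_iff_sum.mpr ⟨hP0, hP1⟩
  set bM := Finset.univ.sup' Finset.univ_nonempty (fun i => |b i|)
  set M := (1 - γ • P)⁻¹
  simp only [mulVec_single_mulVec]
  have hbM : ∀ i, |b i| ≤ bM := fun i => Finset.le_sup' (fun i => |b i|) (Finset.mem_univ i)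
  have hk : ∀ j, (M.map abs *ᵥ fun i => |b i|) j ≤ 1 / (1 - γ) * ((1 - γ) * |b j| + γ * bM) :=
    fun j => by
      convert map_abs_inv_one_sub_smul_mulVec_le hP hγ0.le hγ1 (fun i => abs_nonneg (b i)) hbM j
        using 1
      field_simp [(sub_pos.mpr hγ1).ne']
  have hrows :
      ∑ i, ∑ j, (M j i * b i) ^ 2 ≤ ∑ j, (1 / (1 - γ) * ((1 - γ) * |b j| + γ * bM)) ^ 2 := by
    rw [Finset.sum_comm]
    refine Finset.sum_le_sum fun j _ => ?_
    refine (sum_sq_mul_le_sq_map_abs_mulVec_abs M b j).trans (pow_le_pow_left₀ ?_ (hk j) 2)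
    show 0 ≤ ∑ i, |M j i| * |b i|
    positivity
  refine ⟨hrows, ?_⟩
  calc ∑ i, √(∑ j, (M j i * b i) ^ 2) ≤ √N * √(∑ i, ∑ j, (M j i * b i) ^ 2) := by
        simpa using Real.sum_sqrt_le_sqrt_card_mul_sqrt_sum fun i =>
          Finset.sum_nonneg fun j _ => sq_nonneg (M j i * b i)
    _ ≤ _ := by gcongr
end

section
/- Let P ∈ ℝ^{N×N} be row-stochastic, γ ∈ (0,1), n a positive integer, and let P̂ be the random matrix whose i-th row is (1/n)Σ_{j=1}^{n} X_{ij}ᵀ, where {X_{ij} : 1 ≤ i ≤ N, 1 ≤ j ≤ n} are mutually independent random vectors, each X_{ij} taking values among the standard basis vectors e_1, …, e_N of ℝ^N with ℙ[X_{ij} = e_k] = P_{ik}. Set A = I − γP and Ŷ = γ(P − P̂)A^{-1}, and let κ = max_i |{j : P_{ij} > 0}| be the largest number of nonzero entries in any row of P. Then for any real C > 0 and any integer q > 1, if n ≥ (2C²γ²κ/(1 − γ)²)·log(2N^q), then ℙ[ρ(Ŷ) < 1/C] ≥ 1 − 1/N^{q−1}. -/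
open MeasureTheory ProbabilityTheory Matrix BigOperators

/-!
Put `ε = (1 - γ) / (C γ)` and use the `∞`-operator norm. The Neumann series gives
`‖A⁻¹‖ ≤ 1 / (1 - γ)`, so `ρ(Ŷ) ≤ ‖Ŷ‖ ≤ γ ‖P - P̂‖ / (1 - γ) < 1 / C` as soon as every row of
`P̂ - P` has `ℓ¹`-norm below `ε`.

Off the support of row `i` both `P` and, almost surely, `P̂` vanish, so the `ℓ¹`-norm of that row
is attained as `∑ₗ sₗ (P̂ᵢₗ - Pᵢₗ)` for one of at most `2^κ` sign patterns `s`. For a fixed pattern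
this is the average of `n` independent centred variables with values in `[-1, 1]`, so by
Hoeffding it exceeds `ε` with probability at most `exp (-n ε² / 2)`. A union bound over the `N`
rows and `2^κ` patterns bounds the failure probability by
`N 2^κ exp (-n ε² / 2) ≤ N (N^q)^(-κ) ≤ N^(1 - q)`, by the choice of `n`.
-/

lemma norm_ringInverse_one_sub_le {R : Type*} [NormedRing R] [CompleteSpace R] [NormOneClass R]
    {x : R} (hx : ‖x‖ < 1) : ‖Ring.inverse (1 - x)‖ ≤ (1 - ‖x‖)⁻¹ := by
  have h := tsum_geometric_le_of_norm_lt_one x hx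
  rwa [geom_series_eq_inverse x hx, norm_one, sub_self, zero_add] at h

namespace Matrix

attribute [local instance] Matrix.linftyOpNormedAddCommGroup Matrix.linftyOpNormedSpace
  Matrix.linftyOpNormedRing Matrix.linftyOpNormedAlgebra

variable {m : Type*} [Fintype m]

lemma exists_linfty_opNorm_eq_sum [Nonempty m] (A : Matrix m m ℝ) :
    ∃ i, ‖A‖ = ∑ j, |A i j| := by
  obtain ⟨i, -, hi⟩ := Finset.exists_mem_eq_sup Finset.univ Finset.univ_nonempty
    fun i => ∑ j, ‖A i j‖₊
  refine ⟨i, ?_⟩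
  rw [linfty_opNorm_def, hi]
  push_cast
  simp [Real.norm_eq_abs]

lemma linfty_opNorm_map_ofReal (A : Matrix m m ℝ) : ‖A.map Complex.ofReal‖ = ‖A‖ := by
  simp [linfty_opNorm_def]

variable [DecidableEq m]

lemma card_filter_row_ne_zero_pos_of_mem_rowStochastic {P : Matrix m m ℝ}
    (hP : P ∈ rowStochastic ℝ m) (i : m) : 0 < (Finset.univ.filter fun l => P i l ≠ 0).card := by
  obtain ⟨l, -, hl⟩ := Finset.exists_ne_zero_of_sum_ne_zero
    ((sum_row_of_mem_rowStochastic hP i).trans_ne one_ne_zero)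
  exact Finset.card_pos.mpr ⟨l, Finset.mem_filter.mpr ⟨Finset.mem_univ l, hl⟩⟩

variable [Nonempty m]

lemma linfty_opNorm_le_one_of_mem_rowStochastic {P : Matrix m m ℝ}
    (hP : P ∈ rowStochastic ℝ m) : ‖P‖ ≤ 1 := by
  obtain ⟨i, hi⟩ := exists_linfty_opNorm_eq_sum P
  rw [hi, ← sum_row_of_mem_rowStochastic hP i]
  exact (Finset.sum_congr rfl fun j _ => abs_of_nonneg (nonneg_of_mem_rowStochastic hP)).le

lemma linfty_opNorm_smul_mul_inv_one_sub_smul_le {P : Matrix m m ℝ} (hP : ‖P‖ ≤ 1)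
    {γ : ℝ} (hγ : γ ∈ Set.Ioo 0 1) (D : Matrix m m ℝ) :
    ‖(γ • D) * (1 - γ • P)⁻¹‖ ≤ γ * ‖D‖ / (1 - γ) := by
  obtain ⟨hγ0, hγ1⟩ := hγ
  have hγP : ‖γ • P‖ ≤ γ := by
    rw [norm_smul, Real.norm_of_nonneg hγ0.le]
    exact mul_le_of_le_one_right hγ0.le hP
  have hinv : ‖(1 - γ • P)⁻¹‖ ≤ (1 - γ)⁻¹ := by
    rw [nonsing_inv_eq_ringInverse]
    refine (norm_ringInverse_one_sub_le (hγP.trans_lt hγ1)).trans ?_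
    gcongr
  calc ‖(γ • D) * (1 - γ • P)⁻¹‖ ≤ ‖γ • D‖ * ‖(1 - γ • P)⁻¹‖ := norm_mul_le _ _
    _ ≤ γ * ‖D‖ * (1 - γ)⁻¹ := by
      rw [norm_smul, Real.norm_of_nonneg hγ0.le]
      gcongr
    _ = γ * ‖D‖ / (1 - γ) := div_eq_mul_inv _ _ |>.symm

theorem norm_lt_of_mem_spectrum_smul_sub_mul_inv {P Q : Matrix m m ℝ}
    (hP : P ∈ rowStochastic ℝ m) {γ C : ℝ} (hγ : γ ∈ Set.Ioo 0 1) (hC : 0 < C)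
    (hQ : ∀ i, ∑ l, |Q i l - P i l| < (1 - γ) / (C * γ)) {z : ℂ}
    (hz : z ∈ spectrum ℂ (((γ • (P - Q)) * (1 - γ • P)⁻¹).map Complex.ofReal)) :
    ‖z‖ < 1 / C := by
  have hPQ : ‖P - Q‖ < (1 - γ) / (C * γ) := by
    obtain ⟨i, hi⟩ := exists_linfty_opNorm_eq_sum (P - Q)
    simpa only [hi, sub_apply, abs_sub_comm] using hQ i
  have h1γ : 0 < 1 - γ := sub_pos.2 hγ.2
  calc ‖z‖ ≤ ‖(γ • (P - Q)) * (1 - γ • P)⁻¹‖ := by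
        simpa only [linfty_opNorm_map_ofReal] using spectrum.norm_le_norm_of_mem hz
    _ ≤ γ * ‖P - Q‖ / (1 - γ) :=
        linfty_opNorm_smul_mul_inv_one_sub_smul_le
          (linfty_opNorm_le_one_of_mem_rowStochastic hP) hγ _
    _ < γ * ((1 - γ) / (C * γ)) / (1 - γ) := by gcongr; exact hγ.1
    _ = 1 / C := by field_simp [hγ.1.ne']

end Matrix

lemma Finset.exists_mem_powerset_sum_abs_eq {ι : Type*} [Fintype ι] [DecidableEq ι]
    {d : ι → ℝ} {S : Finset ι} (hd : ∀ l ∉ S, d l = 0) :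
    ∃ T ∈ S.powerset, ∑ l, |d l| = ∑ l, (if l ∈ T then 1 else -1) * d l := by
  refine ⟨S.filter (0 ≤ d ·), Finset.mem_powerset.mpr (Finset.filter_subset _ _),
    Finset.sum_congr rfl fun l _ => ?_⟩
  by_cases hl : l ∈ S
  · by_cases h0 : 0 ≤ d l
    · simp [hl, h0, abs_of_nonneg h0]
    · simp [hl, h0, abs_of_neg (not_le.mp h0)]
  · simp [hl, hd l hl]

section EmpiricalDistribution

variable {Ω ι : Type*} [DecidableEq ι]

lemma apply_eq_indicator_of_eq_single {V : Ω → ι → ℝ} (hV : ∀ ω, ∃ k, V ω = Pi.single k 1)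
    (l : ι) : (fun ω => V ω l) = {ω | V ω = Pi.single l 1}.indicator 1 := by
  funext ω
  obtain ⟨k, hk⟩ := hV ω
  by_cases hkl : k = l
  · simp [hk, hkl]
  · have hne : (Pi.single k 1 : ι → ℝ) ≠ Pi.single l 1 := fun h => by
      simpa [hkl] using congrFun h k
    simp [hk, hkl, hne]

variable [Fintype ι] [MeasurableSpace Ω] {μ : Measure Ω}

lemma integrable_apply_of_eq_single [IsFiniteMeasure μ] {V : Ω → ι → ℝ} (hV : Measurable V)
    (hval : ∀ ω, ∃ k, V ω = Pi.single k 1) (l : ι) : Integrable (fun ω => V ω l) μ := by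
  rw [apply_eq_indicator_of_eq_single hval l]
  exact (integrable_const 1).indicator (hV (measurableSet_singleton _))

lemma integral_apply_of_eq_single {V : Ω → ι → ℝ} (hV : Measurable V)
    (hval : ∀ ω, ∃ k, V ω = Pi.single k 1) (l : ι) :
    ∫ ω, V ω l ∂μ = μ.real {ω | V ω = Pi.single l 1} := by
  rw [apply_eq_indicator_of_eq_single hval l]
  exact integral_indicator_one (hV (measurableSet_singleton _))

variable {n : ℕ} {X : Fin n → Ω → ι → ℝ}

theorem measureReal_sum_mul_empirical_sub_ge_le [IsProbabilityMeasure μ] (hn : 0 < n)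
    (hmeas : ∀ j, Measurable (X j)) (hval : ∀ j ω, ∃ k, X j ω = Pi.single k 1)
    (hindep : iIndepFun X μ) {p : ι → ℝ} (hmean : ∀ j l, ∫ ω, X j ω l ∂μ = p l)
    {c : ι → ℝ} (hc : ∀ l, |c l| ≤ 1) {ε : ℝ} (hε : 0 ≤ ε) :
    μ.real {ω | ε ≤ ∑ l, c l * ((n : ℝ)⁻¹ * ∑ j, X j ω l - p l)} ≤
      Real.exp (-(n * ε ^ 2 / 2)) := by
  set Y : Fin n → Ω → ℝ := fun j ω => ∑ l, c l * X j ω l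
  have hYmeas : ∀ j, Measurable (Y j) := fun j => by fun_prop
  have hYmem : ∀ j ω, Y j ω ∈ Set.Icc (-1) 1 := fun j ω => by
    obtain ⟨k, hk⟩ := hval j ω
    simpa [Y, hk, Pi.single_apply] using abs_le.mp (hc k)
  have hYmean : ∀ j, μ[Y j] = ∑ l, c l * p l := fun j => by
    rw [integral_finsetSum _ fun l _ =>
      (integrable_apply_of_eq_single (hmeas j) (hval j) l).const_mul (c l)]
    simp only [integral_const_mul, hmean]
  have hsubG : ∀ j, HasSubgaussianMGF (fun ω => Y j ω - μ[Y j]) 1 μ := fun j => by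
    have h := hasSubgaussianMGF_of_mem_Icc (μ := μ) (hYmeas j).aemeasurable
      (ae_of_all _ (hYmem j))
    norm_num at h
    exact h
  have hindepY : iIndepFun (fun j ω => Y j ω - μ[Y j]) μ :=
    hindep.comp (fun j (v : ι → ℝ) => ∑ l, c l * v l - ∫ ω, Y j ω ∂μ) fun j => by fun_prop
  have h := HasSubgaussianMGF.measure_sum_ge_le_of_iIndepFun hindepY (s := Finset.univ)
    (fun j _ => hsubG j) (mul_nonneg n.cast_nonneg hε)
  simp only [hYmean] at h
  have hn' : (0 : ℝ) < n := Nat.cast_pos.mpr hn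
  have hevent : {ω | ε ≤ ∑ l, c l * ((n : ℝ)⁻¹ * ∑ j, X j ω l - p l)} =
      {ω | n * ε ≤ ∑ j, (Y j ω - ∑ l, c l * p l)} := by
    ext ω
    have hsum : ∑ j, (Y j ω - ∑ l, c l * p l) =
        n * ∑ l, c l * ((n : ℝ)⁻¹ * ∑ j, X j ω l - p l) := by
      simp only [Y, Finset.sum_sub_distrib, Finset.sum_const, Finset.card_univ,
        Fintype.card_fin, nsmul_eq_mul, mul_sub, Finset.mul_sum]
      rw [Finset.sum_comm]
      congr 1
      exact Finset.sum_congr rfl fun l _ => Finset.sum_congr rfl fun j _ => by field_simp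
    rw [Set.mem_ofPred_eq, Set.mem_ofPred_eq, hsum, mul_le_mul_iff_of_pos_left hn']
  have hexp : -(n * ε) ^ 2 / (2 * ((∑ _j : Fin n, (1 : NNReal) : NNReal) : ℝ)) =
      -(n * ε ^ 2 / 2) := by
    simp only [Finset.sum_const, Finset.card_univ, Fintype.card_fin, nsmul_eq_mul, mul_one]
    push_cast
    field_simp
  rwa [hevent, ← hexp]

theorem measureReal_sum_abs_empirical_sub_ge_le [IsProbabilityMeasure μ] (hn : 0 < n)
    (hmeas : ∀ j, Measurable (X j)) (hval : ∀ j ω, ∃ k, X j ω = Pi.single k 1)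
    (hindep : iIndepFun X μ) {p : ι → ℝ} (hp : ∀ k, 0 ≤ p k)
    (hprob : ∀ j k, μ {ω | X j ω = Pi.single k 1} = ENNReal.ofReal (p k)) {ε : ℝ} (hε : 0 ≤ ε) :
    μ.real {ω | ε ≤ ∑ l, |(n : ℝ)⁻¹ * ∑ j, X j ω l - p l|} ≤
      2 ^ (Finset.univ.filter fun l => p l ≠ 0).card * Real.exp (-(n * ε ^ 2 / 2)) := by
  set S := Finset.univ.filter fun l => p l ≠ 0
  have hmean : ∀ j l, ∫ ω, X j ω l ∂μ = p l := fun j l => by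
    rw [integral_apply_of_eq_single (hmeas j) (hval j), measureReal_def, hprob,
      ENNReal.toReal_ofReal (hp l)]
  have hnull : ∀ᵐ ω ∂μ, ∀ l ∉ S, (n : ℝ)⁻¹ * ∑ j, X j ω l - p l = 0 := by
    have h : ∀ᵐ ω ∂μ, ∀ j l, p l = 0 → X j ω l = 0 := by
      refine ae_all_iff.mpr fun j => ae_all_iff.mpr fun l => ?_
      by_cases hpl : p l = 0
      · have hzero : μ {ω | X j ω = Pi.single l 1} = 0 := by
          rw [hprob, hpl, ENNReal.ofReal_zero]
        filter_upwards [measure_eq_zero_iff_ae_notMem.mp hzero] with ω hω _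
        rw [congrFun (apply_eq_indicator_of_eq_single (hval j) l) ω]
        exact Set.indicator_of_notMem hω 1
      · exact ae_of_all _ fun ω h => absurd h hpl
    filter_upwards [h] with ω hω l hl
    have hpl : p l = 0 := by simpa [S] using hl
    simp [hpl, hω _ l hpl]
  have hcover : {ω | ε ≤ ∑ l, |(n : ℝ)⁻¹ * ∑ j, X j ω l - p l|} ≤ᵐ[μ]
      ⋃ T ∈ S.powerset, {ω | ε ≤ ∑ l, (if l ∈ T then 1 else -1) *
        ((n : ℝ)⁻¹ * ∑ j, X j ω l - p l)} := by
    filter_upwards [hnull] with ω hω hmem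
    obtain ⟨T, hT, hTeq⟩ := Finset.exists_mem_powerset_sum_abs_eq hω
    exact Set.mem_biUnion hT (le_of_le_of_eq hmem hTeq)
  calc _ ≤ μ.real (⋃ T ∈ S.powerset, {ω | ε ≤ ∑ l, (if l ∈ T then 1 else -1) *
        ((n : ℝ)⁻¹ * ∑ j, X j ω l - p l)}) :=
        ENNReal.toReal_mono (measure_ne_top _ _) (measure_mono_ae hcover)
    _ ≤ ∑ T ∈ S.powerset, μ.real {ω | ε ≤ ∑ l, (if l ∈ T then 1 else -1) *
        ((n : ℝ)⁻¹ * ∑ j, X j ω l - p l)} := measureReal_biUnion_finset_le _ _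
    _ ≤ ∑ _T ∈ S.powerset, Real.exp (-(n * ε ^ 2 / 2)) :=
        Finset.sum_le_sum fun T _ => measureReal_sum_mul_empirical_sub_ge_le hn hmeas hval
          hindep hmean (fun l => by split_ifs <;> norm_num) hε
    _ = 2 ^ S.card * Real.exp (-(n * ε ^ 2 / 2)) := by
        rw [Finset.sum_const, Finset.card_powerset, nsmul_eq_mul]
        push_cast
        rfl

end EmpiricalDistribution

lemma mul_two_pow_mul_exp_neg_le {N κ q : ℕ} {x : ℝ} (hN : 0 < N) (hκ : 1 ≤ κ) (hq : 1 ≤ q)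
    (hx : κ * Real.log (2 * N ^ q) ≤ x) : N * 2 ^ κ * Real.exp (-x) ≤ 1 / N ^ (q - 1) := by
  have hN1 : (1 : ℝ) ≤ N := Nat.one_le_cast.mpr hN
  have hexp : Real.exp (-x) ≤ ((2 * (N : ℝ) ^ q) ^ κ)⁻¹ := by
    rw [← Real.exp_log (by positivity : (0 : ℝ) < 2 * N ^ q), ← Real.exp_nat_mul, ← Real.exp_neg]
    exact Real.exp_le_exp.mpr (by linarith)
  calc (N : ℝ) * 2 ^ κ * Real.exp (-x) ≤ N * 2 ^ κ * ((2 * (N : ℝ) ^ q) ^ κ)⁻¹ := by gcongr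
    _ = N / ((N : ℝ) ^ q) ^ κ := by
      rw [mul_pow, mul_inv, div_eq_mul_inv]
      field_simp
    _ ≤ N / (N : ℝ) ^ q := by
      gcongr
      exact le_self_pow₀ (one_le_pow₀ hN1) (by omega)
    _ = 1 / N ^ (q - 1) := by
      rw [← Nat.sub_add_cancel hq, pow_succ, Nat.add_sub_cancel]
      field_simp

lemma mul_le_mul_sq_div_two_of_sample_size_le {γ C κ L n : ℝ} (hγ : γ ∈ Set.Ioo 0 1)
    (hC : 0 < C) (h : 2 * C ^ 2 * γ ^ 2 * κ / (1 - γ) ^ 2 * L ≤ n) :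
    κ * L ≤ n * ((1 - γ) / (C * γ)) ^ 2 / 2 := by
  have h1γ : 0 < 1 - γ := sub_pos.mpr hγ.2
  have hγ0 : γ ≠ 0 := hγ.1.ne'
  have hcoef : 2 * C ^ 2 * γ ^ 2 * κ / (1 - γ) ^ 2 * ((1 - γ) / (C * γ)) ^ 2 / 2 = κ := by
    field_simp
  calc κ * L = 2 * C ^ 2 * γ ^ 2 * κ / (1 - γ) ^ 2 * ((1 - γ) / (C * γ)) ^ 2 / 2 * L := by
        rw [hcoef]
    _ = 2 * C ^ 2 * γ ^ 2 * κ / (1 - γ) ^ 2 * L * ((1 - γ) / (C * γ)) ^ 2 / 2 := by ring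
    _ ≤ n * ((1 - γ) / (C * γ)) ^ 2 / 2 := by gcongr

lemma ofReal_one_sub_le_measure_of_compl_subset {Ω : Type*} [MeasurableSpace Ω] {μ : Measure Ω}
    [IsProbabilityMeasure μ] {B G : Set Ω} {x : ℝ} (hB : μ.real B ≤ x) (hG : Bᶜ ⊆ G) :
    ENNReal.ofReal (1 - x) ≤ μ G := by
  have hcover : 1 ≤ μ.real G + μ.real B := by
    calc 1 = μ.real Set.univ := probReal_univ.symm
      _ ≤ μ.real (G ∪ B) := measureReal_mono fun ω _ => by
        by_cases hω : ω ∈ B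
        · exact Or.inr hω
        · exact Or.inl (hG hω)
      _ ≤ μ.real G + μ.real B := measureReal_union_le _ _
  rw [← ENNReal.ofReal_toReal (measure_ne_top μ G)]
  exact ENNReal.ofReal_le_ofReal (by rw [← measureReal_def]; linarith)

/-- In the multinomial sampling model (`P` row-stochastic, `γ ∈ (0,1)`,
`P̂` with `i`-th row `(1/n) Σ_j X_{ij}ᵀ`, the `X_{ij}` mutually independent with values among
the standard basis vectors and `ℙ[X_{ij} = e_k] = P_{ik}`), set `A = I − γP`,
`Ŷ = γ(P − P̂)A⁻¹`, and let `κ` be the largest number of nonzero entries in any row of `P`.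
For any real `C > 0` and integer `q > 1`, if `n ≥ (2C²γ²κ/(1−γ)²)·log(2N^q)`, then with
probability at least `1 − 1/N^{q−1}`, every complex eigenvalue of `Ŷ` has modulus `< 1/C`
(i.e. `ρ(Ŷ) < 1/C`). -/
theorem stmt19 {N : ℕ} [NeZero N] {Ω : Type*} [MeasurableSpace Ω]
    (μ : Measure Ω) [IsProbabilityMeasure μ]
    (P : Matrix (Fin N) (Fin N) ℝ) (hP0 : ∀ i j, 0 ≤ P i j) (hP1 : ∀ i, ∑ j, P i j = 1)
    (γ : ℝ) (hγ : γ ∈ Set.Ioo (0 : ℝ) 1)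
    (n : ℕ) (hn : 0 < n)
    (X : Fin N → Fin n → Ω → (Fin N → ℝ))
    (hXmeas : ∀ i j, Measurable (X i j))
    (hXval : ∀ i j ω, ∃ k : Fin N, X i j ω = Pi.single k 1)
    (hXprob : ∀ i j k, μ {ω | X i j ω = Pi.single k 1} = ENNReal.ofReal (P i k))
    (hXindep : iIndepFun (fun p : Fin N × Fin n => X p.1 p.2) μ)
    (C : ℝ) (hC : 0 < C) (q : ℕ) (hq : 1 < q)
    (κ : ℕ)
    (hκ : κ = Finset.univ.sup (fun i => (Finset.univ.filter (fun j => P i j ≠ 0)).card))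
    (hsample : 2 * C ^ 2 * γ ^ 2 * (κ : ℝ)
        / (1 - γ) ^ 2 * Real.log (2 * (N : ℝ) ^ q) ≤ (n : ℝ)) :
    letI A : Matrix (Fin N) (Fin N) ℝ := 1 - γ • P
    letI Phat : Ω → Matrix (Fin N) (Fin N) ℝ :=
      fun ω => Matrix.of fun i l => (n : ℝ)⁻¹ * ∑ j, X i j ω l
    letI Yhat : Ω → Matrix (Fin N) (Fin N) ℝ := fun ω => (γ • (P - Phat ω)) * A⁻¹
    ENNReal.ofReal (1 - 1 / (N : ℝ) ^ (q - 1))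
      ≤ μ {ω | ∀ z ∈ spectrum ℂ ((Yhat ω).map Complex.ofReal), ‖z‖ < 1 / C} := by
  have hPstoch : P ∈ rowStochastic ℝ (Fin N) := mem_rowStochastic_iff_sum.mpr ⟨hP0, hP1⟩
  set ε := (1 - γ) / (C * γ)
  have hε : 0 < ε := div_pos (sub_pos.mpr hγ.2) (mul_pos hC hγ.1)
  have hκ_ge : ∀ i, (Finset.univ.filter fun l => P i l ≠ 0).card ≤ κ := fun i =>
    hκ ▸ Finset.le_sup (f := fun i => (Finset.univ.filter fun l => P i l ≠ 0).card)
      (Finset.mem_univ i)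
  have hκ_pos : 1 ≤ κ := (card_filter_row_ne_zero_pos_of_mem_rowStochastic hPstoch 0).trans_le
    (hκ_ge 0)
  have hrow : ∀ i, μ.real {ω | ε ≤ ∑ l, |(n : ℝ)⁻¹ * ∑ j, X i j ω l - P i l|} ≤
      2 ^ κ * Real.exp (-(n * ε ^ 2 / 2)) := fun i =>
    (measureReal_sum_abs_empirical_sub_ge_le hn (hXmeas i) (hXval i)
      (hXindep.precomp (g := Prod.mk i) (Prod.mk_right_injective i)) (hP0 i) (hXprob i)
      hε.le).trans (by gcongr; exacts [one_le_two, hκ_ge i])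
  have hbad : μ.real (⋃ i, {ω | ε ≤ ∑ l, |(n : ℝ)⁻¹ * ∑ j, X i j ω l - P i l|}) ≤
      1 / N ^ (q - 1) := by
    calc _ ≤ ∑ i : Fin N, 2 ^ κ * Real.exp (-(n * ε ^ 2 / 2)) :=
          (measureReal_iUnion_fintype_le _).trans (Finset.sum_le_sum fun i _ => hrow i)
      _ = N * 2 ^ κ * Real.exp (-(n * ε ^ 2 / 2)) := by
          rw [Finset.sum_const, Finset.card_univ, Fintype.card_fin, nsmul_eq_mul, mul_assoc]
      _ ≤ 1 / N ^ (q - 1) := mul_two_pow_mul_exp_neg_le (NeZero.pos N) hκ_pos hq.le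
          (mul_le_mul_sq_div_two_of_sample_size_le hγ hC hsample)
  refine ofReal_one_sub_le_measure_of_compl_subset hbad fun ω hω z hz => ?_
  simp only [Set.compl_iUnion, Set.mem_iInter, Set.mem_compl_iff, Set.mem_ofPred_eq, not_le] at hω
  exact norm_lt_of_mem_spectrum_smul_sub_mul_inv hPstoch hγ hC hω hz
end
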